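/- arXiv:1112.5271 — 6 statements merged into one kernel-verified Lean document; each statement's English description precedes it below -/
import Mathlib

section
/- Let M be a Hermitian matrix over ℂ indexed by (Fin dA × Fin dB), and let ρ be a matrix of the same type that is positive semidefinite, has trace 1, and whose partial transpose ρ^Γ is positive semidefinite (i.e. ρ is a PPT state). Then Re (trace (M * ρ)) ≤ ‖M^Γ‖. (This expresses h_PPT(M) ≤ ‖M^Γ‖_∞.) -/
open Matrix
open scoped ComplexOrder

noncomputable section

/-- Partial transpose on the second tensor factor. -/
def ptrans {α β : Type*} (X : Matrix (α × β) (α × β) ℂ) : Matrix (α × β) (α × β) ℂ :=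
  fun p q => X (p.1, q.2) (q.1, p.2)

/-- L2 (Euclidean) operator norm of a matrix: the largest singular value. -/
def opNorm {n : Type*} [Fintype n] [DecidableEq n] (X : Matrix n n ℂ) : ℝ :=
  ‖Matrix.toEuclideanCLM (𝕜 := ℂ) X‖

/-!
The partial transpose only relabels the double sum defining `tr (X Y)`, so
`tr (M ρ) = tr (M^Γ ρ^Γ)`. Since `ρ^Γ` is positive semidefinite it factors as `Bᴴ B`, and
`tr (M^Γ Bᴴ B) = ∑ᵢ ⟪bᵢ, M^Γ bᵢ⟫ ≤ ‖M^Γ‖ ∑ᵢ ‖bᵢ‖² = ‖M^Γ‖ tr ρ^Γ = ‖M^Γ‖`, where the `bᵢ` are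
the conjugated rows of `B`.
-/

open scoped InnerProductSpace

section PartialTranspose

variable {α β : Type*} [Fintype α] [Fintype β]

lemma trace_ptrans (X : Matrix (α × β) (α × β) ℂ) : trace (ptrans X) = trace X :=
  rfl

lemma trace_ptrans_mul_ptrans (X Y : Matrix (α × β) (α × β) ℂ) :
    trace (ptrans X * ptrans Y) = trace (X * Y) := by
  simp only [trace, diag, mul_apply, ptrans, ← Finset.sum_product']
  let swapSecond : (α × β) × (α × β) ≃ (α × β) × (α × β) :=
    ⟨fun pq => ((pq.1.1, pq.2.2), (pq.2.1, pq.1.2)),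
      fun pq => ((pq.1.1, pq.2.2), (pq.2.1, pq.1.2)), fun _ => rfl, fun _ => rfl⟩
  exact Fintype.sum_equiv swapSecond _ _ fun _ => rfl

end PartialTranspose

lemma re_inner_apply_self_le {E : Type*} [NormedAddCommGroup E] [InnerProductSpace ℂ E]
    (T : E →L[ℂ] E) (x : E) : (⟪x, T x⟫_ℂ).re ≤ ‖T‖ * ‖x‖ ^ 2 :=
  calc (⟪x, T x⟫_ℂ).re ≤ ‖x‖ * ‖T x‖ := re_inner_le_norm (𝕜 := ℂ) x (T x)
    _ ≤ ‖x‖ * (‖T‖ * ‖x‖) := by gcongr; exact T.le_opNorm x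
    _ = ‖T‖ * ‖x‖ ^ 2 := by ring

section OperatorNorm

variable {n : Type*} [Fintype n] [DecidableEq n]

lemma mul_mul_conjTranspose_apply_self (A B : Matrix n n ℂ) (i : n) :
    (B * A * Bᴴ) i i =
      ⟪WithLp.toLp 2 (star (B i)), toEuclideanCLM (𝕜 := ℂ) A (WithLp.toLp 2 (star (B i)))⟫_ℂ := by
  rw [mul_mul_apply, toEuclideanCLM_toLp, EuclideanSpace.inner_toLp_toLp, star_star]
  exact dotProduct_comm (B i) _

lemma re_trace_mul_le_opNorm_mul_re_trace (A σ : Matrix n n ℂ) (hσ : σ.PosSemidef) :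
    (trace (A * σ)).re ≤ opNorm A * (trace σ).re := by
  open scoped MatrixOrder in
  obtain ⟨B, rfl⟩ := CStarAlgebra.nonneg_iff_eq_star_mul_self.mp hσ.nonneg
  set x : n → EuclideanSpace ℂ n := fun i => WithLp.toLp 2 (star (B i))
  have trace_mul_eq : (trace (A * (star B * B))).re =
      ∑ i, (⟪x i, toEuclideanCLM (𝕜 := ℂ) A (x i)⟫_ℂ).re := by
    rw [← mul_assoc, trace_mul_cycle, trace, Complex.re_sum]
    simp only [diag, star_eq_conjTranspose, mul_mul_conjTranspose_apply_self, x]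
  have trace_eq : (trace (star B * B)).re = ∑ i, ‖x i‖ ^ 2 := by
    rw [trace_mul_comm, trace, Complex.re_sum]
    refine Finset.sum_congr rfl fun i _ => ?_
    have diag_eq := mul_mul_conjTranspose_apply_self 1 B i
    rw [mul_one, map_one, one_apply_eq_self] at diag_eq
    rw [diag, star_eq_conjTranspose, diag_eq]
    exact inner_self_eq_norm_sq (𝕜 := ℂ) (x i)
  rw [trace_mul_eq, trace_eq, Finset.mul_sum]
  exact Finset.sum_le_sum fun i _ => re_inner_apply_self_le _ (x i)

end OperatorNorm

theorem hPPT_le_opNorm_ptrans_general {dA dB : ℕ}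
    (M ρ : Matrix (Fin dA × Fin dB) (Fin dA × Fin dB) ℂ)
    (htr : ρ.trace = 1)
    (hppt : (ptrans ρ).PosSemidef) :
    (Matrix.trace (M * ρ)).re ≤ opNorm (ptrans M) := by
  have h := re_trace_mul_le_opNorm_mul_re_trace (ptrans M) (ptrans ρ) hppt
  rwa [trace_ptrans_mul_ptrans, trace_ptrans, htr, Complex.one_re, mul_one] at h

/-- Theorem: for any Hermitian `M` and any PPT state `ρ`,
`Re tr(M ρ) ≤ ‖M^Γ‖`, i.e. `h_PPT(M) ≤ ‖M^Γ‖_∞`. -/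
theorem hPPT_le_opNorm_ptrans {dA dB : ℕ}
    (M ρ : Matrix (Fin dA × Fin dB) (Fin dA × Fin dB) ℂ)
    (hM : M.IsHermitian) (hρ : ρ.PosSemidef) (htr : ρ.trace = 1)
    (hppt : (ptrans ρ).PosSemidef) :
    (Matrix.trace (M * ρ)).re ≤ opNorm (ptrans M) :=
  hPPT_le_opNorm_ptrans_general M ρ htr hppt
end
end

section
/- Let M be a Hermitian matrix over ℂ indexed by (Fin dA × Fin dB) and let n ≥ 1. Then for all Euclidean-unit vectors a : (Fin n → Fin dA) → ℂ and b : (Fin n → Fin dB) → ℂ, Re ⟪a ⊗ b, (M^{⊗n}).mulVec (a ⊗ b)⟫ ≤ ‖M^Γ‖^n, where (a ⊗ b)(f,g) := a f * b g. (This expresses h_SEP(M^{⊗n}) ≤ ‖M^Γ‖_∞^n.) -/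
open Matrix

noncomputable section

/-- `n`-th tensor power of a bipartite matrix. -/
def tensPow {dA dB : ℕ} (M : Matrix (Fin dA × Fin dB) (Fin dA × Fin dB) ℂ) (n : ℕ) :
    Matrix ((Fin n → Fin dA) × (Fin n → Fin dB)) ((Fin n → Fin dA) × (Fin n → Fin dB)) ℂ :=
  fun p q => ∏ i : Fin n, M (p.1 i, p.2 i) (q.1 i, q.2 i)

/-!
Moving the transpose from the matrix onto the second vector gives
`⟨a ⊗ b, X (a ⊗ b)⟩ = ⟨a ⊗ b̄, X^Γ (a ⊗ b̄)⟩`, and `(M^{⊗n})^Γ = (M^Γ)^{⊗n}` entrywise. Since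
`a ⊗ b̄` is a unit vector, the form is at most `‖(M^Γ)^{⊗n}‖ ≤ ‖M^Γ‖^n`: the operator norm is
submultiplicative under Kronecker products because `A ⊗ B = (A ⊗ 1)(1 ⊗ B)` and `A ↦ A ⊗ 1`,
`B ↦ 1 ⊗ B` are ⋆-homomorphisms of C⋆-algebras, hence contractive.
-/

open scoped Matrix.Norms.L2Operator Kronecker

lemma opNorm_eq_norm {ι : Type*} [Fintype ι] [DecidableEq ι] (X : Matrix ι ι ℂ) :
    opNorm X = ‖X‖ :=
  rfl

namespace Matrix

variable {ι κ : Type*} [Fintype ι] [DecidableEq ι] [Fintype κ] [DecidableEq κ]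

def kroneckerOneStarAlgHom : Matrix ι ι ℂ →⋆ₐ[ℂ] Matrix (ι × κ) (ι × κ) ℂ where
  toFun A := A ⊗ₖ 1
  map_one' := one_kronecker_one
  map_mul' A B := by rw [← mul_kronecker_mul, one_mul]
  map_zero' := zero_kronecker _
  map_add' A B := add_kronecker _ _ _
  commutes' r := by
    simp only [Algebra.algebraMap_eq_smul_one]
    exact (smul_kronecker r 1 1).trans (congrArg _ one_kronecker_one)
  map_star' A := by simp [star_eq_conjTranspose, conjTranspose_kronecker]

def oneKroneckerStarAlgHom : Matrix κ κ ℂ →⋆ₐ[ℂ] Matrix (ι × κ) (ι × κ) ℂ where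
  toFun B := 1 ⊗ₖ B
  map_one' := one_kronecker_one
  map_mul' A B := by rw [← mul_kronecker_mul, one_mul]
  map_zero' := kronecker_zero _
  map_add' A B := kronecker_add _ _ _
  commutes' r := by
    simp only [Algebra.algebraMap_eq_smul_one]
    exact (kronecker_smul r 1 1).trans (congrArg _ one_kronecker_one)
  map_star' A := by simp [star_eq_conjTranspose, conjTranspose_kronecker]

def reindexStarAlgEquiv (e : ι ≃ κ) : Matrix ι ι ℂ ≃⋆ₐ[ℂ] Matrix κ κ ℂ :=
  .ofAlgEquiv (reindexAlgEquiv ℂ ℂ e) fun A => by simp [star_eq_conjTranspose]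

lemma norm_kronecker_le (A : Matrix ι ι ℂ) (B : Matrix κ κ ℂ) : ‖A ⊗ₖ B‖ ≤ ‖A‖ * ‖B‖ := by
  have h : A ⊗ₖ B = (A ⊗ₖ 1) * (1 ⊗ₖ B) := by rw [← mul_kronecker_mul, mul_one, one_mul]
  rw [h]
  exact (norm_mul_le _ _).trans (mul_le_mul
    (NonUnitalStarAlgHom.norm_apply_le (kroneckerOneStarAlgHom (κ := κ)) A)
    (NonUnitalStarAlgHom.norm_apply_le (oneKroneckerStarAlgHom (ι := ι)) B)
    (norm_nonneg _) (norm_nonneg _))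

lemma norm_reindex_le (e : ι ≃ κ) (A : Matrix ι ι ℂ) : ‖reindex e e A‖ ≤ ‖A‖ :=
  NonUnitalStarAlgHom.norm_apply_le (reindexStarAlgEquiv e) A

lemma re_star_dotProduct_mulVec_le (X : Matrix ι ι ℂ) (v : ι → ℂ) :
    (star v ⬝ᵥ X *ᵥ v).re ≤ ‖X‖ * ‖WithLp.toLp 2 v‖ ^ 2 := by
  have h : star v ⬝ᵥ X *ᵥ v =
      inner ℂ (WithLp.toLp 2 v) (toEuclideanCLM (𝕜 := ℂ) X (WithLp.toLp 2 v)) := by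
    rw [toEuclideanCLM_toLp, EuclideanSpace.inner_toLp_toLp, dotProduct_comm]
  calc (star v ⬝ᵥ X *ᵥ v).re ≤ ‖star v ⬝ᵥ X *ᵥ v‖ := Complex.re_le_norm _
    _ ≤ ‖WithLp.toLp 2 v‖ * ‖toEuclideanCLM (𝕜 := ℂ) X (WithLp.toLp 2 v)‖ :=
      h ▸ norm_inner_le_norm _ _
    _ ≤ ‖WithLp.toLp 2 v‖ * (‖X‖ * ‖WithLp.toLp 2 v‖) :=
      mul_le_mul_of_nonneg_left ((toEuclideanCLM (𝕜 := ℂ) X).le_opNorm _) (norm_nonneg _)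
    _ = ‖X‖ * ‖WithLp.toLp 2 v‖ ^ 2 := by ring

end Matrix

lemma star_dotProduct_mulVec_ptrans {α β : Type*} [Fintype α] [Fintype β]
    (X : Matrix (α × β) (α × β) ℂ) (a : α → ℂ) (b : β → ℂ) :
    star (fun p : α × β => a p.1 * b p.2) ⬝ᵥ X *ᵥ (fun p => a p.1 * b p.2) =
      star (fun p : α × β => a p.1 * star b p.2) ⬝ᵥ ptrans X *ᵥ (fun p => a p.1 * star b p.2) := by
  simp only [dotProduct, mulVec, Finset.mul_sum, ← Fintype.sum_prod_type']
  refine Fintype.sum_equiv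
    ⟨fun r => ((r.1.1, r.2.2), (r.2.1, r.1.2)), fun r => ((r.1.1, r.2.2), (r.2.1, r.1.2)),
      fun _ => rfl, fun _ => rfl⟩ _ _ fun r => ?_
  simp only [Equiv.coe_fn_mk, ptrans, Pi.star_apply, star_mul', star_star]
  ring

lemma EuclideanSpace.norm_toLp_mul {α β : Type*} [Fintype α] [Fintype β]
    (a : α → ℂ) (b : β → ℂ) :
    ‖WithLp.toLp 2 (fun p : α × β => a p.1 * b p.2)‖ =
      ‖WithLp.toLp 2 a‖ * ‖WithLp.toLp 2 b‖ := by
  rw [← sq_eq_sq₀ (norm_nonneg _) (by positivity), mul_pow, EuclideanSpace.norm_sq_eq,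
    EuclideanSpace.norm_sq_eq, EuclideanSpace.norm_sq_eq, Finset.sum_mul_sum,
    ← Finset.univ_product_univ, Finset.sum_product]
  simp [mul_pow]

lemma EuclideanSpace.norm_toLp_star {ι : Type*} [Fintype ι] (v : ι → ℂ) :
    ‖WithLp.toLp 2 (star v)‖ = ‖WithLp.toLp 2 v‖ := by
  simp [EuclideanSpace.norm_eq]

lemma ptrans_tensPow {dA dB : ℕ} (M : Matrix (Fin dA × Fin dB) (Fin dA × Fin dB) ℂ) (n : ℕ) :
    ptrans (tensPow M n) = tensPow (ptrans M) n := rfl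

def tensPowSuccEquiv (α β : Type*) (n : ℕ) :
    (α × β) × ((Fin n → α) × (Fin n → β)) ≃ (Fin (n + 1) → α) × (Fin (n + 1) → β) :=
  (Equiv.prodProdProdComm _ _ _ _).trans
    ((Fin.consEquiv fun _ => α).prodCongr (Fin.consEquiv fun _ => β))

lemma tensPow_succ {dA dB : ℕ} (M : Matrix (Fin dA × Fin dB) (Fin dA × Fin dB) ℂ) (n : ℕ) :
    tensPow M (n + 1) =
      reindex (tensPowSuccEquiv _ _ n) (tensPowSuccEquiv _ _ n) (M ⊗ₖ tensPow M n) := by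
  ext p q
  simp only [tensPow, reindex_apply, submatrix_apply, Fin.prod_univ_succ]
  rfl

lemma tensPow_zero {dA dB : ℕ} (M : Matrix (Fin dA × Fin dB) (Fin dA × Fin dB) ℂ) :
    tensPow M 0 = 1 := by
  ext p q
  obtain rfl := Subsingleton.elim p q
  simp [tensPow]

lemma norm_tensPow_le {dA dB : ℕ} (M : Matrix (Fin dA × Fin dB) (Fin dA × Fin dB) ℂ) (n : ℕ) :
    ‖tensPow M n‖ ≤ ‖M‖ ^ n := by
  induction n with
  | zero => rw [tensPow_zero, CStarRing.norm_one, pow_zero]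
  | succ n ih =>
    rw [tensPow_succ, pow_succ']
    exact (Matrix.norm_reindex_le _ _).trans ((Matrix.norm_kronecker_le _ _).trans
      (mul_le_mul_of_nonneg_left ih (norm_nonneg _)))

theorem hSEP_tensor_power_le_opNorm_ptrans_pow_general {dA dB : ℕ}
    (M : Matrix (Fin dA × Fin dB) (Fin dA × Fin dB) ℂ)
    (n : ℕ)
    (a : EuclideanSpace ℂ (Fin n → Fin dA)) (b : EuclideanSpace ℂ (Fin n → Fin dB))
    (ha : ‖a‖ = 1) (hb : ‖b‖ = 1) :
    (star (fun p : (Fin n → Fin dA) × (Fin n → Fin dB) => a p.1 * b p.2) ⬝ᵥ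
        (tensPow M n).mulVec
          (fun p : (Fin n → Fin dA) × (Fin n → Fin dB) => a p.1 * b p.2)).re ≤
      opNorm (ptrans M) ^ n := by
  rw [star_dotProduct_mulVec_ptrans, ptrans_tensPow, opNorm_eq_norm]
  have hw : ‖WithLp.toLp 2
      (fun p : (Fin n → Fin dA) × (Fin n → Fin dB) => a p.1 * star b.ofLp p.2)‖ = 1 := by
    rw [EuclideanSpace.norm_toLp_mul, EuclideanSpace.norm_toLp_star, WithLp.toLp_ofLp,
      WithLp.toLp_ofLp, ha, hb, one_mul]
  calc _ ≤ ‖tensPow (ptrans M) n‖ * 1 ^ 2 := hw ▸ Matrix.re_star_dotProduct_mulVec_le _ _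
    _ ≤ ‖ptrans M‖ ^ n := by simpa using norm_tensPow_le (ptrans M) n

/-- Theorem: `h_SEP(M^{⊗n}) ≤ ‖M^Γ‖^n` for Hermitian `M`. -/
theorem hSEP_tensor_power_le_opNorm_ptrans_pow {dA dB : ℕ}
    (M : Matrix (Fin dA × Fin dB) (Fin dA × Fin dB) ℂ) (hM : M.IsHermitian)
    (n : ℕ) (hn : 1 ≤ n)
    (a : EuclideanSpace ℂ (Fin n → Fin dA)) (b : EuclideanSpace ℂ (Fin n → Fin dB))
    (ha : ‖a‖ = 1) (hb : ‖b‖ = 1) :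
    (star (fun p : (Fin n → Fin dA) × (Fin n → Fin dB) => a p.1 * b p.2) ⬝ᵥ
        (tensPow M n).mulVec
          (fun p : (Fin n → Fin dA) × (Fin n → Fin dB) => a p.1 * b p.2)).re ≤
      opNorm (ptrans M) ^ n :=
  hSEP_tensor_power_le_opNorm_ptrans_pow_general M n a b ha hb
end
end

section
/- Let dA, dB, r be positive integers and let M be an orthogonal projection (Hermitian matrix with M * M = M) over ℂ indexed by (Fin dA × Fin dB) with rank M = r. Then there exist Euclidean-unit vectors a : Fin dA → ℂ and b : Fin dB → ℂ such that Re ⟪a ⊗ b, M.mulVec (a ⊗ b)⟫ ≥ max ((r:ℝ)/(dA·dB)) (1/dA), where (a ⊗ b)(i,j) := a i * b j. (That is, h_SEP(M) ≥ max{r/(dA dB), 1/dA}.) -/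
/-!
Both bounds are witnessed by explicit product vectors. Since `M` is idempotent,
`tr M = rank M = r`, so some diagonal entry `M (i, j) (i, j)` is at least `r / (dA dB)`, and
`eᵢ ⊗ eⱼ` works. For `1 / dA`, take a nonzero `v` in the range of `M` (a column of `M`). Viewed
as a `dA × dB` array, `v` has a row `v (i, ·)` carrying at least a `1 / dA` share of `‖v‖²`;
with `a = eᵢ` and `b` that row normalized, `|⟪a ⊗ b, v⟫|² ≥ ‖v‖² / dA`. Finally, as `M` is an
orthogonal projection fixing `v`, Cauchy–Schwarz gives
`⟪x, M x⟫ = ‖M x‖² ≥ |⟪M x, v⟫|² / ‖v‖² = |⟪x, v⟫|² / ‖v‖²`.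
-/

open Matrix

noncomputable section

theorem Matrix.trace_eq_rank_of_isIdempotentElem {K n : Type*} [Field K] [Fintype n]
    [DecidableEq n] {A : Matrix n n K} (hA : IsIdempotentElem A) : A.trace = A.rank := by
  have hproj := LinearMap.IsIdempotentElem.isProj_range _ (hA.map Matrix.toLinAlgEquiv')
  rw [← Matrix.trace_toLin'_eq, Matrix.rank, ← Matrix.toLin'_apply']
  exact hproj.trace

theorem Matrix.exists_mulVec_eq_self_of_isIdempotentElem {R n : Type*} [Semiring R] [Fintype n]
    [DecidableEq n] {A : Matrix n n R} (hA : IsIdempotentElem A) (hA0 : A ≠ 0) :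
    ∃ v ≠ 0, A *ᵥ v = v := by
  obtain ⟨j, hj⟩ : ∃ j, A.col j ≠ 0 := by
    by_contra! h
    exact hA0 (Matrix.ext fun i j => congrFun (h j) i)
  refine ⟨A.col j, hj, ?_⟩
  rw [← mulVec_single_one, mulVec_mulVec, hA.eq]

namespace Matrix.IsHermitian

variable {n : Type*} [Fintype n] {A : Matrix n n ℂ}

theorem star_dotProduct_mulVec (hA : A.IsHermitian) (x w : n → ℂ) :
    star x ⬝ᵥ A *ᵥ w = star (A *ᵥ x) ⬝ᵥ w := by
  rw [dotProduct_mulVec, star_mulVec, hA.eq]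

theorem norm_star_dotProduct_sq_le (hA : A.IsHermitian) (hA2 : IsIdempotentElem A)
    {v : n → ℂ} (hv : A *ᵥ v = v) (x : n → ℂ) :
    ‖star x ⬝ᵥ v‖ ^ 2 ≤ (star x ⬝ᵥ A *ᵥ x).re * ‖WithLp.toLp 2 v‖ ^ 2 := by
  set y : EuclideanSpace ℂ n := WithLp.toLp 2 (A *ᵥ x)
  have hxv : star x ⬝ᵥ v = inner ℂ y (WithLp.toLp 2 v) := by
    rw [EuclideanSpace.inner_toLp_toLp, dotProduct_comm v, ← hA.star_dotProduct_mulVec, hv]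
  have hxx : (star x ⬝ᵥ A *ᵥ x).re = ‖y‖ ^ 2 := by
    rw [← RCLike.re_to_complex, ← inner_self_eq_norm_sq (𝕜 := ℂ), EuclideanSpace.inner_toLp_toLp,
      dotProduct_comm (A *ᵥ x), ← hA.star_dotProduct_mulVec, mulVec_mulVec, hA2.eq]
  rw [hxv, hxx, ← mul_pow]
  gcongr
  exact norm_inner_le_norm _ _

end Matrix.IsHermitian

theorem exists_norm_eq_one_inner_eq_norm {E : Type*} [NormedAddCommGroup E]
    [InnerProductSpace ℂ E] {w : E} (hw : w ≠ 0) : ∃ b : E, ‖b‖ = 1 ∧ inner ℂ b w = ‖w‖ := by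
  have hw' : (‖w‖ : ℂ) ≠ 0 := Complex.ofReal_ne_zero.2 (norm_ne_zero_iff.2 hw)
  refine ⟨(‖w‖⁻¹ : ℂ) • w, ?_, ?_⟩
  · rw [norm_smul, norm_inv, Complex.norm_real, norm_norm, inv_mul_cancel₀ (by exact_mod_cast hw')]
  · rw [inner_smul_left, inner_self_eq_norm_sq_to_K, map_inv₀, Complex.conj_ofReal]
    simp only [Complex.coe_algebraMap]
    rw [sq, inv_mul_cancel_left₀ hw']

section TensorVec

variable {m n : Type*}

def tensorVec (a : EuclideanSpace ℂ m) (b : EuclideanSpace ℂ n) : m × n → ℂ :=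
  fun p => a p.1 * b p.2

theorem tensorVec_single_single [DecidableEq m] [DecidableEq n] (i : m) (j : n) :
    tensorVec (EuclideanSpace.single i 1) (EuclideanSpace.single j 1) = Pi.single (i, j) 1 := by
  ext ⟨k, l⟩
  by_cases hk : k = i <;> by_cases hl : l = j <;> simp [tensorVec, hk, hl]

theorem star_tensorVec_single_dotProduct [Fintype m] [Fintype n] [DecidableEq m] (i : m)
    (b : EuclideanSpace ℂ n) (v : m × n → ℂ) :
    star (tensorVec (EuclideanSpace.single i 1) b) ⬝ᵥ v =
      inner ℂ b (WithLp.toLp 2 fun j => v (i, j)) := by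
  rw [EuclideanSpace.inner_toLp_toLp, dotProduct_comm]
  simp [dotProduct, tensorVec, Fintype.sum_prod_type, apply_ite, Finset.sum_ite_irrel]

variable [Fintype m] [Fintype n]

theorem exists_tensorVec_re_trace_div_card_le [Nonempty m] [Nonempty n]
    (M : Matrix (m × n) (m × n) ℂ) :
    ∃ (a : EuclideanSpace ℂ m) (b : EuclideanSpace ℂ n), ‖a‖ = 1 ∧ ‖b‖ = 1 ∧
      M.trace.re / (Fintype.card m * Fintype.card n) ≤
        (star (tensorVec a b) ⬝ᵥ M *ᵥ tensorVec a b).re := by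
  classical
  obtain ⟨⟨i, j⟩, -, hp⟩ := Finset.exists_le_of_sum_le (Finset.univ_nonempty (α := m × n))
    (f := fun _ => M.trace.re / (Fintype.card m * Fintype.card n)) (g := fun p => (M p p).re)
    (le_of_eq (by
      simp only [trace, diag_apply, Complex.re_sum, Finset.sum_const, Finset.card_univ,
        Fintype.card_prod, nsmul_eq_mul, Nat.cast_mul]
      field_simp))
  refine ⟨EuclideanSpace.single i 1, EuclideanSpace.single j 1, by simp, by simp, ?_⟩
  simpa [tensorVec_single_single] using hp

theorem exists_tensorVec_norm_sq_div_card_le {v : m × n → ℂ} (hv : v ≠ 0) :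
    ∃ (a : EuclideanSpace ℂ m) (b : EuclideanSpace ℂ n), ‖a‖ = 1 ∧ ‖b‖ = 1 ∧
      ‖WithLp.toLp 2 v‖ ^ 2 / Fintype.card m ≤ ‖star (tensorVec a b) ⬝ᵥ v‖ ^ 2 := by
  classical
  obtain ⟨⟨i₀, -⟩, -⟩ := Function.ne_iff.mp hv
  have hm : (0 : ℝ) < Fintype.card m := Nat.cast_pos.2 (Fintype.card_pos_iff.2 ⟨i₀⟩)
  have hv_pos : 0 < ‖WithLp.toLp 2 v‖ := by simpa using hv
  let row : m → EuclideanSpace ℂ n := fun i => WithLp.toLp 2 fun j => v (i, j)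
  have hsum : ∑ i, ‖row i‖ ^ 2 = ‖WithLp.toLp 2 v‖ ^ 2 := by
    simp [row, EuclideanSpace.norm_sq_eq, Fintype.sum_prod_type]
  obtain ⟨i, -, hi⟩ := Finset.exists_le_of_sum_le (Finset.univ_nonempty_iff.2 ⟨i₀⟩)
    (f := fun _ => ‖WithLp.toLp 2 v‖ ^ 2 / Fintype.card m) (g := fun i => ‖row i‖ ^ 2)
    (le_of_eq (by
      simp only [Finset.sum_const, Finset.card_univ, nsmul_eq_mul, hsum]
      field_simp))
  have hrow : row i ≠ 0 := by
    rintro h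
    have : 0 < ‖row i‖ ^ 2 := (by positivity : (0 : ℝ) < _ / _).trans_le hi
    simp [h] at this
  obtain ⟨b, hb, hbrow⟩ := exists_norm_eq_one_inner_eq_norm hrow
  refine ⟨EuclideanSpace.single i 1, b, by simp, hb, ?_⟩
  rwa [star_tensorVec_single_dotProduct, hbrow, Complex.norm_real, norm_norm]

theorem Matrix.IsHermitian.exists_tensorVec_inv_card_le {A : Matrix (m × n) (m × n) ℂ}
    (hA : A.IsHermitian) (hA2 : IsIdempotentElem A) (hA0 : A ≠ 0) :
    ∃ (a : EuclideanSpace ℂ m) (b : EuclideanSpace ℂ n), ‖a‖ = 1 ∧ ‖b‖ = 1 ∧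
      1 / (Fintype.card m : ℝ) ≤ (star (tensorVec a b) ⬝ᵥ A *ᵥ tensorVec a b).re := by
  classical
  obtain ⟨v, hv0, hv⟩ := exists_mulVec_eq_self_of_isIdempotentElem hA2 hA0
  obtain ⟨a, b, ha, hb, hab⟩ := exists_tensorVec_norm_sq_div_card_le hv0
  refine ⟨a, b, ha, hb, ?_⟩
  have hv_pos : 0 < ‖WithLp.toLp 2 v‖ ^ 2 := pow_pos (by simpa using hv0) 2
  refine le_of_mul_le_mul_left ?_ hv_pos
  rw [mul_one_div, mul_comm]
  exact hab.trans (hA.norm_star_dotProduct_sq_le hA2 hv _)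

end TensorVec

theorem hSEP_lower_bound_general {dA dB r : ℕ} (hr : 0 < r)
    (M : Matrix (Fin dA × Fin dB) (Fin dA × Fin dB) ℂ)
    (hM : M.IsHermitian) (hproj : M * M = M) (hrank : M.rank = r) :
    ∃ (a : EuclideanSpace ℂ (Fin dA)) (b : EuclideanSpace ℂ (Fin dB)),
      ‖a‖ = 1 ∧ ‖b‖ = 1 ∧
      max ((r : ℝ) / ((dA : ℝ) * (dB : ℝ))) (1 / (dA : ℝ)) ≤
        (star (fun p : Fin dA × Fin dB => a p.1 * b p.2) ⬝ᵥ
          M.mulVec (fun p : Fin dA × Fin dB => a p.1 * b p.2)).re := by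
  have hM0 : M ≠ 0 := by
    rintro rfl
    rw [rank_zero] at hrank
    omega
  obtain ⟨⟨i, j⟩, -⟩ := Function.ne_iff.mp hM0
  have : Nonempty (Fin dA) := ⟨i⟩
  have : Nonempty (Fin dB) := ⟨j⟩
  obtain ⟨a₁, b₁, ha₁, hb₁, h₁⟩ := exists_tensorVec_re_trace_div_card_le M
  obtain ⟨a₂, b₂, ha₂, hb₂, h₂⟩ := hM.exists_tensorVec_inv_card_le hproj hM0
  rw [trace_eq_rank_of_isIdempotentElem hproj, hrank] at h₁
  simp only [Complex.natCast_re, Fintype.card_fin] at h₁ h₂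
  rcases le_total ((r : ℝ) / (dA * dB)) (1 / dA) with h | h
  · exact ⟨a₂, b₂, ha₂, hb₂, (max_eq_right h).trans_le h₂⟩
  · exact ⟨a₁, b₁, ha₁, hb₁, (max_eq_left h).trans_le h₁⟩

/-- Theorem: for a rank-`r` projector `M` on `ℂ^{dA} ⊗ ℂ^{dB}`,
`h_SEP(M) ≥ max { r/(dA·dB), 1/dA }`, witnessed by some product unit vector. -/
theorem hSEP_lower_bound {dA dB r : ℕ} (hdA : 0 < dA) (hdB : 0 < dB) (hr : 0 < r)
    (M : Matrix (Fin dA × Fin dB) (Fin dA × Fin dB) ℂ)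
    (hM : M.IsHermitian) (hproj : M * M = M) (hrank : M.rank = r) :
    ∃ (a : EuclideanSpace ℂ (Fin dA)) (b : EuclideanSpace ℂ (Fin dB)),
      ‖a‖ = 1 ∧ ‖b‖ = 1 ∧
      max ((r : ℝ) / ((dA : ℝ) * (dB : ℝ))) (1 / (dA : ℝ)) ≤
        (star (fun p : Fin dA × Fin dB => a p.1 * b p.2) ⬝ᵥ
          M.mulVec (fun p : Fin dA × Fin dB => a p.1 * b p.2)).re :=
  hSEP_lower_bound_general hr M hM hproj hrank
end
end

section
/- For every k ≥ 1 and every permutation π of Fin k, the number of permutations σ of Fin k satisfying c(π⁻¹ * σ) + c(σ) = k + c(π) is at most catalan k, the k-th Catalan number. -/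
/-!
Write `|f|` for the transposition length `k - c(f)`; the condition on `σ` says
`|σ| + |σ⁻¹ π| = |π|`, i.e. `σ` lies on a geodesic from `1` to `π`. Multiplying by `swap a b`
lowers `|f|` by one if `a` and `b` lie in one cycle of `f` and raises it by one otherwise. Hence
for a geodesic `σ` the point `c = σ a` lies in the cycle of `a` in `π`, and `σ ↦ swap a c * σ`
embeds the geodesics with `σ a = c` into those of the permutation obtained from `π` by cutting
that cycle, of length `m`, at `a` and `c` and deleting `a`; its cycle is replaced by cycles of
lengths `j` and `m - 1 - j`. By induction on `|π|` and the recursion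
`catalan m = ∑ j, catalan j * catalan (m - 1 - j)`, there are at most `∏ catalan ℓ` geodesics,
the product running over the cycle lengths `ℓ` of `π`; this is at most `catalan k` because
`catalan` is supermultiplicative.
-/

/-- Number of cycles of a permutation, counting fixed points. -/
def cyc {k : ℕ} (π : Equiv.Perm (Fin k)) : ℕ :=
  π.cycleType.card + (Finset.univ.filter fun x => π x = x).card

namespace List

variable {α : Type*}

theorem getElem_append_singleton_eq_headD_drop {T : List α} {a : α} {j : ℕ}
    (hj : j < (T ++ [a]).length) : (T ++ [a])[j] = (T.drop j).headD a := by
  rcases lt_or_ge j T.length with h | h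
  · rw [getElem_append_left h, drop_eq_getElem_cons h, headD_cons]
  · obtain rfl : j = T.length := by simp at hj; omega
    simp

variable [DecidableEq α]

theorem swap_headD_mul_formPerm_cons (a : α) (l : List α) :
    Equiv.swap a (l.headD a) * formPerm (a :: l) = formPerm l := by
  cases l with
  | nil => rw [headD_nil, Equiv.swap_self, formPerm_singleton, formPerm_nil]; rfl
  | cons x l => rw [formPerm_cons_cons, headD_cons, Equiv.swap_mul_self_mul]

theorem swap_mul_formPerm_cons_append_cons {a b : α} {l₁ l₂ : List α}
    (h : (a :: (l₁ ++ b :: l₂)).Nodup) :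
    Equiv.swap a b * formPerm (a :: (l₁ ++ b :: l₂)) =
      formPerm (a :: l₁) * formPerm (b :: l₂) := by
  induction l₁ generalizing a with
  | nil =>
    rw [nil_append, formPerm_cons_cons, Equiv.swap_mul_self_mul, formPerm_singleton, one_mul]
  | cons x l₁ ih =>
    have hab : a ≠ b := fun e => (nodup_cons.1 h).1 (by simp [e])
    have hxb : x ≠ b := fun e => (nodup_cons.1 (nodup_cons.1 h).2).1 (by simp [e])
    have hswap : Equiv.swap a b * Equiv.swap a x = Equiv.swap a x * Equiv.swap x b := by
      rw [← Equiv.swap_mul_swap_mul_swap hab.symm (Ne.symm hxb), ← mul_assoc, ← mul_assoc,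
        Equiv.swap_mul_self, one_mul, Equiv.swap_comm b a]
    rw [cons_append, formPerm_cons_cons, ← mul_assoc, hswap, mul_assoc, ih (nodup_cons.1 h).2,
      ← mul_assoc, ← formPerm_cons_cons]

theorem disjoint_formPerm_of_forall_apply_eq_self {l : List α} {f : Equiv.Perm α}
    (h : ∀ x ∈ l, f x = x) : l.formPerm.Disjoint f := fun x =>
  (em (x ∈ l)).symm.imp formPerm_apply_of_notMem (h x)

theorem formPerm_cons_apply_self {a : α} {l : List α} (h : (a :: l).Nodup) :
    formPerm (a :: l) a = l.headD a := by
  cases l with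
  | nil => rfl
  | cons x l => exact formPerm_apply_head a x l h

theorem disjoint_formPerm_formPerm_mul {l₁ l₂ : List α} {r : Equiv.Perm α}
    (hl : (l₁ ++ l₂).Nodup) (hr : ∀ x ∈ l₁ ++ l₂, r x = x) :
    l₁.formPerm.Disjoint (l₂.formPerm * r) :=
  disjoint_formPerm_of_forall_apply_eq_self fun x hx => by
    rw [Equiv.Perm.mul_apply, hr x (mem_append_left _ hx),
      formPerm_apply_of_notMem (disjoint_of_nodup_append hl hx)]

end List

open Finset

theorem catalan_mul_catalan_le (m n : ℕ) : catalan m * catalan n ≤ catalan (m + n) := by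
  induction m using Nat.strong_induction_on with
  | _ m ih =>
  cases m with
  | zero => rw [catalan_zero, one_mul, zero_add]
  | succ m =>
    calc catalan (m + 1) * catalan n
        = ∑ i ∈ range (m + 1), catalan i * (catalan (m - i) * catalan n) := by
          rw [catalan_succ, Fin.sum_univ_eq_sum_range (fun i => catalan i * catalan (m - i)),
            sum_mul]
          simp only [mul_assoc]
      _ ≤ ∑ i ∈ range (m + 1), catalan i * catalan (m + n - i) :=
          sum_le_sum fun i hi => Nat.mul_le_mul_left _ <| (ih (m - i) (by omega)).trans_eq <| by
            rw [Nat.sub_add_comm (Nat.lt_succ_iff.1 (mem_range.1 hi))]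
      _ ≤ ∑ i ∈ range (m + n + 1), catalan i * catalan (m + n - i) :=
          sum_le_sum_of_subset (range_subset_range.2 (by omega))
      _ = catalan (m + 1 + n) := by
          rw [Nat.add_right_comm m 1 n, catalan_succ,
            Fin.sum_univ_eq_sum_range (fun i => catalan i * catalan (m + n - i))]

theorem catalan_mono : Monotone catalan :=
  monotone_nat_of_le_succ fun n => by simpa [catalan_one] using catalan_mul_catalan_le n 1

theorem Multiset.prod_map_catalan_le_catalan_sum (s : Multiset ℕ) :
    (s.map catalan).prod ≤ catalan s.sum := by
  induction s using Multiset.induction with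
  | empty => simp [catalan_zero]
  | cons n s ih =>
    rw [Multiset.map_cons, Multiset.prod_cons, Multiset.sum_cons]
    exact (Nat.mul_le_mul_left _ ih).trans (catalan_mul_catalan_le _ _)

namespace Equiv.Perm

variable {α : Type*} [DecidableEq α]

/-- Cut the cycle of `π` through `a` at `a` and `c`, then delete `a` from its piece: the cycle
`(a x₁ … xⱼ c y₁ … yᵢ)` is replaced by `(x₁ … xⱼ)(c y₁ … yᵢ)`, and for `c = a` by
`(x₁ … xⱼ)`. -/
def cutCycle (π : Perm α) (a c : α) : Perm α :=
  swap a ((swap a c * π) a) * (swap a c * π)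

theorem cutCycle_mul_of_apply_eq_self (π : Perm α) {r : Perm α} {a : α} (c : α)
    (hr : r a = a) :
    cutCycle (π * r) a c = cutCycle π a c * r := by
  simp only [cutCycle, ← mul_assoc, mul_apply, hr]

theorem cutCycle_formPerm {a : α} {l₁ l₂ : List α} (h : (a :: (l₁ ++ l₂)).Nodup) :
    cutCycle (a :: (l₁ ++ l₂)).formPerm a (l₂.headD a) = l₁.formPerm * l₂.formPerm := by
  have ha : (a :: l₁).Nodup := h.sublist (by simp)
  cases l₂ with
  | nil =>
    rw [List.append_nil, cutCycle, List.headD_nil, swap_self, ← one_def, one_mul,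
      List.formPerm_cons_apply_self ha, List.swap_headD_mul_formPerm_cons, List.formPerm_nil,
      mul_one]
  | cons c l₂ =>
    have hac : a ∉ c :: l₂ := fun hm => (List.nodup_cons.1 h).1 (List.mem_append_right _ hm)
    rw [cutCycle, List.headD_cons, List.swap_mul_formPerm_cons_append_cons h, mul_apply,
      List.formPerm_apply_of_notMem hac, List.formPerm_cons_apply_self ha, ← mul_assoc,
      List.swap_headD_mul_formPerm_cons]

theorem cutCycle_formPerm_cons_mul {a : α} {T : List α} {r : Perm α} (hT : (a :: T).Nodup)
    (hr : r a = a) {j : ℕ} (hj : j < (T ++ [a]).length) :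
    cutCycle ((a :: T).formPerm * r) a (T ++ [a])[j] =
      (T.take j).formPerm * (T.drop j).formPerm * r := by
  rw [cutCycle_mul_of_apply_eq_self _ _ hr, List.getElem_append_singleton_eq_headD_drop,
    ← cutCycle_formPerm (l₁ := T.take j), List.take_append_drop]
  rwa [List.take_append_drop]

variable [Fintype α]

/-- The length of `f` as a product of transpositions, `Fintype.card α` minus the number of
cycles of `f`. -/
def swapLength (f : Perm α) : ℕ := (f.cycleType.map (· - 1)).sum

def catalanWeight (f : Perm α) : ℕ := (f.cycleType.map catalan).prod

theorem swapLength_mul_of_disjoint {f g : Perm α} (h : f.Disjoint g) :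
    swapLength (f * g) = swapLength f + swapLength g := by
  simp only [swapLength, h.cycleType_mul, Multiset.map_add, Multiset.sum_add]

theorem catalanWeight_mul_of_disjoint {f g : Perm α} (h : f.Disjoint g) :
    catalanWeight (f * g) = catalanWeight f * catalanWeight g := by
  simp only [catalanWeight, h.cycleType_mul, Multiset.map_add, Multiset.prod_add]

theorem swapLength_one : swapLength (1 : Perm α) = 0 := by
  simp [swapLength]

theorem catalanWeight_one : catalanWeight (1 : Perm α) = 1 := by
  simp [catalanWeight]

theorem swapLength_inv (f : Perm α) : swapLength f⁻¹ = swapLength f := by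
  rw [swapLength, swapLength, cycleType_inv]

theorem eq_one_of_swapLength_eq_zero {f : Perm α} (h : swapLength f = 0) : f = 1 := by
  rw [← cycleType_eq_zero, Multiset.eq_zero_iff_forall_notMem]
  intro n hn
  have := Multiset.sum_eq_zero_iff.1 h (n - 1) (Multiset.mem_map_of_mem _ hn)
  have := two_le_of_mem_cycleType hn
  omega

theorem cycleType_formPerm_of_nodup {l : List α} (hl : l.Nodup) :
    l.formPerm.cycleType = if 2 ≤ l.length then {l.length} else 0 := by
  split_ifs with h
  · rw [(List.isCycle_formPerm hl h).cycleType, List.support_formPerm_of_nodup _ hl,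
      List.card_toFinset, hl.dedup]
    rintro x rfl
    simp at h
  · rw [cycleType_eq_zero, List.formPerm_eq_one_iff _ hl]
    omega

theorem swapLength_formPerm {l : List α} (hl : l.Nodup) :
    swapLength l.formPerm = l.length - 1 := by
  rw [swapLength, cycleType_formPerm_of_nodup hl]
  split_ifs with h
  · simp
  · simp
    omega

theorem catalanWeight_formPerm {l : List α} (hl : l.Nodup) :
    catalanWeight l.formPerm = catalan l.length := by
  rw [catalanWeight, cycleType_formPerm_of_nodup hl]
  split_ifs with h
  · simp
  · interval_cases h : l.length <;> simp [catalan_zero, catalan_one]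

theorem swapLength_formPerm_mul {l : List α} {r : Perm α} (hl : l.Nodup)
    (hr : ∀ x ∈ l, r x = x) : swapLength (l.formPerm * r) = l.length - 1 + swapLength r := by
  rw [swapLength_mul_of_disjoint (List.disjoint_formPerm_of_forall_apply_eq_self hr),
    swapLength_formPerm hl]

theorem catalanWeight_formPerm_mul {l : List α} {r : Perm α} (hl : l.Nodup)
    (hr : ∀ x ∈ l, r x = x) :
    catalanWeight (l.formPerm * r) = catalan l.length * catalanWeight r := by
  rw [catalanWeight_mul_of_disjoint (List.disjoint_formPerm_of_forall_apply_eq_self hr),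
    catalanWeight_formPerm hl]

theorem swapLength_formPerm_mul_formPerm_mul {l₁ l₂ : List α} {r : Perm α}
    (hl : (l₁ ++ l₂).Nodup) (hr : ∀ x ∈ l₁ ++ l₂, r x = x) :
    swapLength (l₁.formPerm * l₂.formPerm * r) =
      l₁.length - 1 + (l₂.length - 1) + swapLength r := by
  rw [mul_assoc, swapLength_mul_of_disjoint (List.disjoint_formPerm_formPerm_mul hl hr),
    swapLength_formPerm hl.of_append_left,
    swapLength_formPerm_mul hl.of_append_right fun x hx => hr x (List.mem_append_right _ hx),
    add_assoc]

theorem catalanWeight_formPerm_mul_formPerm_mul {l₁ l₂ : List α} {r : Perm α}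
    (hl : (l₁ ++ l₂).Nodup) (hr : ∀ x ∈ l₁ ++ l₂, r x = x) :
    catalanWeight (l₁.formPerm * l₂.formPerm * r) =
      catalan l₁.length * catalan l₂.length * catalanWeight r := by
  rw [mul_assoc, catalanWeight_mul_of_disjoint (List.disjoint_formPerm_formPerm_mul hl hr),
    catalanWeight_formPerm hl.of_append_left,
    catalanWeight_formPerm_mul hl.of_append_right fun x hx => hr x (List.mem_append_right _ hx),
    mul_assoc]

theorem exists_eq_formPerm_cons_mul {π : Perm α} {a : α} (ha : π a ≠ a) :
    ∃ (T : List α) (r : Perm α), T ≠ [] ∧ (a :: T).Nodup ∧ (∀ x ∈ a :: T, r x = x) ∧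
      (∀ x, π.SameCycle a x → x ∈ a :: T) ∧ π = (a :: T).formPerm * r := by
  have hmem : a ∈ π.support := mem_support.2 ha
  obtain ⟨T, hT⟩ : ∃ T, toList π a = a :: T := by
    obtain ⟨b, T, h⟩ := List.exists_cons_of_ne_nil (mt toList_eq_nil_iff.1 (not_not.2 hmem))
    have h0 := toList_getElem_zero π a hmem
    simp only [h, List.getElem_cons_zero] at h0
    exact ⟨T, h0 ▸ h⟩
  refine ⟨T, (π.cycleOf a)⁻¹ * π, ?_, hT ▸ nodup_toList π a, fun x hx => ?_,
    fun x hx => hT ▸ mem_toList_iff.2 ⟨hx, hmem⟩,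
    by rw [← hT, formPerm_toList, mul_inv_cancel_left]⟩
  · rintro rfl
    simpa [hT] using two_le_length_toList_iff_mem_support.2 hmem
  · rw [← hT, mem_toList_iff] at hx
    rw [mul_apply, inv_eq_iff_eq, hx.1.cycleOf_apply]

theorem swapLength_swap_mul_of_sameCycle {f : Perm α} {a b : α} (hab : a ≠ b)
    (h : f.SameCycle a b) : swapLength (swap a b * f) + 1 = swapLength f := by
  obtain ⟨T, r, -, hnd, hr, hcyc, rfl⟩ :=
    exists_eq_formPerm_cons_mul fun hfa => hab (h.eq_of_left hfa)
  obtain ⟨l₁, l₂, rfl⟩ :=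
    List.append_of_mem ((List.mem_cons.1 (hcyc b h)).resolve_left hab.symm)
  rw [← mul_assoc, List.swap_mul_formPerm_cons_append_cons hnd,
    swapLength_formPerm_mul_formPerm_mul hnd hr, swapLength_formPerm_mul hnd hr]
  simp only [List.length_cons, List.length_append]
  omega

theorem swapLength_swap_apply_mul {f : Perm α} {a : α} (ha : f a ≠ a) :
    swapLength (swap a (f a) * f) + 1 = swapLength f :=
  swapLength_swap_mul_of_sameCycle (Ne.symm ha) (sameCycle_apply_right.2 (SameCycle.refl f a))

theorem sameCycle_swap_mul_of_not_sameCycle {f : Perm α} {a b : α} (h : ¬f.SameCycle a b) :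
    (swap a b * f).SameCycle a b := by
  have hstep : ∀ y, f y = a → (swap a b * f).SameCycle y b := fun y hy =>
    ⟨1, by rw [zpow_one, mul_apply, hy, swap_apply_left]⟩
  -- Along the `f`-cycle of `a`, which avoids `b`, the permutation `swap a b * f` agrees with `f`
  -- until it reaches `f⁻¹ a`, which it sends to `b`.
  have hreach : ∀ n y, (f ^ (n + 1)) y = a → (swap a b * f).SameCycle y b := by
    intro n
    induction n with
    | zero => exact fun y hy => hstep y (by simpa using hy)
    | succ n ih =>
      intro y hy
      by_cases hfy : f y = a
      · exact hstep y hfy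
      rw [pow_succ, mul_apply] at hy
      have hfyb : f y ≠ b := by
        rintro rfl
        exact h (SameCycle.symm ⟨(n + 1 : ℕ), by rw [zpow_natCast, hy]⟩)
      have hg : (swap a b * f) y = f y := by rw [mul_apply, swap_apply_of_ne_of_ne hfy hfyb]
      exact sameCycle_apply_left.1 (hg ▸ ih (f y) hy)
  obtain ⟨n, hn⟩ := Nat.exists_eq_add_one_of_ne_zero (orderOf_pos f).ne'
  exact hreach n a (by rw [← hn, pow_orderOf_eq_one, one_apply])

theorem swapLength_swap_mul_of_not_sameCycle {f : Perm α} {a b : α} (h : ¬f.SameCycle a b) :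
    swapLength (swap a b * f) = swapLength f + 1 := by
  have hab : a ≠ b := fun e => h (e ▸ SameCycle.refl f a)
  have := swapLength_swap_mul_of_sameCycle hab (sameCycle_swap_mul_of_not_sameCycle h)
  rwa [swap_mul_self_mul, eq_comm] at this

theorem swapLength_swap_mul_le (f : Perm α) (a b : α) :
    swapLength (swap a b * f) ≤ swapLength f + 1 := by
  rcases eq_or_ne a b with rfl | hab
  · rw [swap_self, ← one_def, one_mul]
    exact Nat.le_succ _
  by_cases h : f.SameCycle a b
  · have := swapLength_swap_mul_of_sameCycle hab h
    omega
  · exact (swapLength_swap_mul_of_not_sameCycle h).le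

theorem swapLength_mul_swap_le (f : Perm α) (a b : α) :
    swapLength (f * swap a b) ≤ swapLength f + 1 := by
  rw [← inv_mul_cancel_right (f * swap a b) f, ← swap_apply_apply]
  exact swapLength_swap_mul_le f (f a) (f b)

theorem swapLength_mul_le (f g : Perm α) :
    swapLength (f * g) ≤ swapLength f + swapLength g := by
  induction h : swapLength g using Nat.strong_induction_on generalizing f g with
  | _ n ih =>
  by_cases hg : g = 1
  · simp [hg]
  obtain ⟨a, ha⟩ := not_forall.1 (mt Perm.ext hg)
  have hlen := swapLength_swap_apply_mul ha
  calc swapLength (f * g) = swapLength (f * swap a (g a) * (swap a (g a) * g)) := by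
        rw [mul_assoc, swap_mul_self_mul]
    _ ≤ swapLength (f * swap a (g a)) + swapLength (swap a (g a) * g) := ih _ (by omega) _ _ rfl
    _ ≤ swapLength f + n := by have := swapLength_mul_swap_le f a (g a); omega

def geodesicSet (π : Perm α) : Finset (Perm α) :=
  Finset.univ.filter fun σ => swapLength σ + swapLength (σ⁻¹ * π) = swapLength π

theorem mem_geodesicSet {π σ : Perm α} :
    σ ∈ geodesicSet π ↔ swapLength σ + swapLength (σ⁻¹ * π) = swapLength π := by
  simp [geodesicSet]

theorem geodesicSet_one : geodesicSet (1 : Perm α) = {1} := by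
  ext σ
  rw [mem_geodesicSet, swapLength_one, Finset.mem_singleton]
  constructor
  · intro h
    exact eq_one_of_swapLength_eq_zero (by omega)
  · rintro rfl
    simp [swapLength_one]

theorem sameCycle_of_mem_geodesicSet {π σ : Perm α} (hσ : σ ∈ geodesicSet π) (a : α) :
    π.SameCycle a (σ a) := by
  by_contra h
  have hσa : σ a ≠ a := fun e => h (by rw [e])
  have hσ' := swapLength_swap_apply_mul hσa
  have hπ := swapLength_swap_mul_of_not_sameCycle h
  have htri := swapLength_mul_le (swap a (σ a) * σ) (σ⁻¹ * π)
  rw [mul_assoc, mul_inv_cancel_left] at htri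
  rw [mem_geodesicSet] at hσ
  omega

theorem swap_mul_mem_geodesicSet {π σ : Perm α} (hσ : σ ∈ geodesicSet π) (a : α) :
    swap a (σ a) * σ ∈ geodesicSet (swap a (σ a) * π) := by
  by_cases hσa : σ a = a
  · rwa [hσa, swap_self, ← one_def, one_mul, one_mul]
  have h₁ := swapLength_swap_apply_mul hσa
  have h₂ := swapLength_swap_mul_of_sameCycle (Ne.symm hσa) (sameCycle_of_mem_geodesicSet hσ a)
  rw [mem_geodesicSet] at hσ ⊢
  rw [mul_inv_rev, swap_inv, mul_assoc, swap_mul_self_mul]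
  omega

theorem mem_geodesicSet_swap_mul {ρ σ : Perm α} {a : α} (hσ : σ ∈ geodesicSet ρ)
    (ha : σ a = a) :
    σ ∈ geodesicSet (swap a (ρ a) * ρ) := by
  by_cases hρa : ρ a = a
  · rwa [hρa, swap_self, ← one_def, one_mul]
  have hσ_inv : σ⁻¹ a = a := inv_eq_iff_eq.2 ha.symm
  have hτa : (σ⁻¹ * ρ) a ≠ a := by
    rw [mul_apply, Ne, inv_eq_iff_eq, ha]
    exact hρa
  have hconj : σ⁻¹ * (swap a (ρ a) * ρ) = swap a ((σ⁻¹ * ρ) a) * (σ⁻¹ * ρ) := by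
    rw [mul_apply, ← hσ_inv, swap_apply_apply, hσ_inv, inv_inv]
    group
  have h₁ := swapLength_swap_apply_mul hρa
  have h₂ := swapLength_swap_apply_mul hτa
  rw [mem_geodesicSet] at hσ ⊢
  rw [hconj]
  omega

theorem swap_mul_mem_geodesicSet_cutCycle {π σ : Perm α} (hσ : σ ∈ geodesicSet π) (a : α) :
    swap a (σ a) * σ ∈ geodesicSet (cutCycle π a (σ a)) :=
  mem_geodesicSet_swap_mul (swap_mul_mem_geodesicSet hσ a) (by rw [mul_apply, swap_apply_right])

theorem card_geodesicSet_le_sum_card_geodesicSet_cutCycle {ι : Type*} [Fintype ι]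
    {π : Perm α} {a : α} {c : ι → α} (hc : Function.Injective c)
    (hcover : ∀ x, π.SameCycle a x → ∃ j, c j = x) :
    #(geodesicSet π) ≤ ∑ j, #(geodesicSet (cutCycle π a (c j))) := by
  have hmaps : ∀ σ ∈ geodesicSet π, σ a ∈ univ.image c := fun σ hσ => by
    obtain ⟨j, hj⟩ := hcover _ (sameCycle_of_mem_geodesicSet hσ a)
    exact mem_image.2 ⟨j, mem_univ _, hj⟩
  rw [card_eq_sum_card_fiberwise hmaps, sum_image fun i _ j _ h => hc h]
  refine sum_le_sum fun j _ => card_le_card_of_injOn (swap a (c j) * ·) ?_ ?_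
  · intro σ hσ
    obtain ⟨hσ, hσa⟩ := mem_filter.1 hσ
    rw [← hσa]
    exact swap_mul_mem_geodesicSet_cutCycle hσ a
  · intro σ _ τ _ h
    exact mul_left_cancel h

theorem swapLength_cutCycle_formPerm_cons_mul_lt {a : α} {T : List α} {r : Perm α}
    (hT₀ : T ≠ []) (hT : (a :: T).Nodup) (hr : ∀ x ∈ a :: T, r x = x) {j : ℕ}
    (hj : j < (T ++ [a]).length) :
    swapLength (cutCycle ((a :: T).formPerm * r) a (T ++ [a])[j]) <
      swapLength ((a :: T).formPerm * r) := by
  have hsplit : (T.take j ++ T.drop j).Nodup := by rw [List.take_append_drop]; exact hT.of_cons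
  rw [cutCycle_formPerm_cons_mul hT (hr a List.mem_cons_self) hj,
    swapLength_formPerm_mul_formPerm_mul hsplit fun x hx => hr x (by simp_all),
    swapLength_formPerm_mul hT hr]
  have := List.length_pos_iff.2 hT₀
  simp only [List.length_take, List.length_drop, List.length_cons, List.length_append,
    List.length_nil] at hj ⊢
  omega

theorem catalanWeight_cutCycle_formPerm_cons_mul {a : α} {T : List α} {r : Perm α}
    (hT : (a :: T).Nodup) (hr : ∀ x ∈ a :: T, r x = x) {j : ℕ} (hj : j < (T ++ [a]).length) :
    catalanWeight (cutCycle ((a :: T).formPerm * r) a (T ++ [a])[j]) =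
      catalan j * catalan (T.length - j) * catalanWeight r := by
  have hsplit : (T.take j ++ T.drop j).Nodup := by rw [List.take_append_drop]; exact hT.of_cons
  rw [cutCycle_formPerm_cons_mul hT (hr a List.mem_cons_self) hj,
    catalanWeight_formPerm_mul_formPerm_mul hsplit fun x hx => hr x (by simp_all),
    List.length_take, List.length_drop, min_eq_left (by simpa [Nat.lt_succ_iff] using hj)]

theorem card_geodesicSet_le_catalanWeight (π : Perm α) :
    #(geodesicSet π) ≤ catalanWeight π := by
  induction h : swapLength π using Nat.strong_induction_on generalizing π with
  | _ n ih =>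
  by_cases hπ : π = 1
  · rw [hπ, geodesicSet_one, card_singleton, catalanWeight_one]
  obtain ⟨a, ha⟩ := not_forall.1 (mt Perm.ext hπ)
  obtain ⟨T, r, hT₀, hT, hr, hcycle, rfl⟩ := exists_eq_formPerm_cons_mul ha
  have hnd : (T ++ [a]).Nodup := List.nodup_append_comm.1 hT
  -- The cut points `c j = π ^ (j + 1) a` run once through the cycle of `a`, and cutting at
  -- `c j` leaves cycles of lengths `j` and `T.length - j`: this is the Catalan recursion.
  let c : Fin (T.length + 1) → α := fun j => (T ++ [a])[(j : ℕ)]'(by simpa using j.2)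
  have hcover : ∀ x, ((a :: T).formPerm * r).SameCycle a x → ∃ j, c j = x := fun x hx => by
    obtain ⟨i, hi, rfl⟩ :=
      List.getElem_of_mem (l := T ++ [a]) (by simpa [or_comm] using hcycle x hx)
    exact ⟨⟨i, by simpa using hi⟩, rfl⟩
  calc #(geodesicSet _)
      ≤ ∑ j, #(geodesicSet (cutCycle _ a (c j))) :=
        card_geodesicSet_le_sum_card_geodesicSet_cutCycle
          (fun i j hij => Fin.ext (hnd.getElem_inj_iff.1 hij)) hcover
    _ ≤ ∑ j : Fin (T.length + 1), catalan j * catalan (T.length - j) * catalanWeight r :=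
        sum_le_sum fun j _ =>
          (ih _ (h ▸ swapLength_cutCycle_formPerm_cons_mul_lt hT₀ hT hr _) _ rfl).trans_eq
            (catalanWeight_cutCycle_formPerm_cons_mul hT hr _)
    _ = catalanWeight ((a :: T).formPerm * r) := by
        rw [← sum_mul, ← catalan_succ, catalanWeight_formPerm_mul hT hr, List.length_cons]

theorem catalanWeight_le_catalan_card (f : Perm α) :
    catalanWeight f ≤ catalan (Fintype.card α) :=
  (Multiset.prod_map_catalan_le_catalan_sum _).trans (catalan_mono (sum_cycleType_le f))

theorem card_cycleType_add_swapLength (f : Perm α) :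
    Multiset.card f.cycleType + swapLength f = #f.support := by
  have h : ∀ x ∈ f.cycleType, 1 + (x - 1) = id x := fun x hx => by
    have := two_le_of_mem_cycleType hx
    simp only [id]
    omega
  rw [← sum_cycleType, swapLength]
  calc Multiset.card f.cycleType + (f.cycleType.map (· - 1)).sum
      = (f.cycleType.map fun x => 1 + (x - 1)).sum := by
        rw [Multiset.sum_map_add, Multiset.map_const', Multiset.sum_replicate, smul_eq_mul,
          mul_one]
    _ = f.cycleType.sum := by rw [Multiset.map_congr rfl h, Multiset.map_id]

theorem cyc_add_swapLength {k : ℕ} (f : Perm (Fin k)) : cyc f + swapLength f = k := by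
  have hfix : (univ.filter fun x => f x = x) = f.supportᶜ := by
    ext x
    simp [mem_support]
  have := card_cycleType_add_swapLength f
  have := f.support.card_le_univ
  rw [cyc, hfix, card_compl, Fintype.card_fin] at *
  omega

end Equiv.Perm

open Equiv.Perm in
theorem card_perms_on_geodesic_le_catalan_general {k : ℕ} (π : Equiv.Perm (Fin k)) :
    (Finset.univ.filter fun σ : Equiv.Perm (Fin k) =>
        cyc (π⁻¹ * σ) + cyc σ = k + cyc π).card ≤ catalan k := by
  have hgeo : (univ.filter fun σ : Equiv.Perm (Fin k) =>
      cyc (π⁻¹ * σ) + cyc σ = k + cyc π) = geodesicSet π := by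
    refine filter_congr fun σ _ => ?_
    have h₁ := cyc_add_swapLength (π⁻¹ * σ)
    have h₂ := cyc_add_swapLength σ
    have h₃ := cyc_add_swapLength π
    rw [← swapLength_inv, mul_inv_rev, inv_inv] at h₁
    omega
  calc _ = #(geodesicSet π) := by rw [hgeo]
    _ ≤ catalanWeight π := card_geodesicSet_le_catalanWeight π
    _ ≤ catalan k := (catalanWeight_le_catalan_card π).trans_eq (by rw [Fintype.card_fin])

/-- Theorem: the number of `σ` lying on a geodesic between `π` and the identity, i.e. with
`c(π⁻¹ σ) + c(σ) = k + c(π)`, is at most the `k`-th Catalan number. -/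
theorem card_perms_on_geodesic_le_catalan {k : ℕ} (hk : 1 ≤ k) (π : Equiv.Perm (Fin k)) :
    (Finset.univ.filter fun σ : Equiv.Perm (Fin k) =>
        cyc (π⁻¹ * σ) + cyc σ = k + cyc π).card ≤ catalan k :=
  card_perms_on_geodesic_le_catalan_general π
end

section
/- Let k ≥ 1 and let π be a permutation of Fin k. Then there exists a k-cycle κ of Fin k (a permutation that is a single cycle on all of Fin k, i.e. c(κ) = 1) such that for every natural number ℓ, w_ℓ(π) ≤ w_{ℓ + c(π) − 1}(κ), where w_ℓ denotes the number of primitive factorisations of length ℓ. -/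
/-- Number of primitive factorisations of `π` into `ℓ` transpositions: sequences
`((s₁,t₁),…,(s_ℓ,t_ℓ))` with `sᵢ < tᵢ`, `t₁ ≤ t₂ ≤ … ≤ t_ℓ` and
`swap s₁ t₁ * ⋯ * swap s_ℓ t_ℓ = π`. -/
def wfact {k : ℕ} (ℓ : ℕ) (π : Equiv.Perm (Fin k)) : ℕ :=
  (Finset.univ.filter fun f : Fin ℓ → Fin k × Fin k =>
    (∀ i, (f i).1 < (f i).2) ∧ (∀ i j : Fin ℓ, i ≤ j → (f i).2 ≤ (f j).2) ∧
    (List.ofFn fun i => Equiv.swap (f i).1 (f i).2).prod = π).card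

/-!
Multiplying `π` on the right by a transposition `(a t)` with `a < t = k - 1` and `a` outside the
cycle of `t` merges two cycles into one, and appending the pair `(a, t)` to a primitive
factorisation of `π` gives a primitive factorisation of `π * (a t)`, because `t` is the largest
possible second entry. Doing this `c(π) - 1` times reaches a `k`-cycle `κ`, each step injecting
factorisations of length `ℓ` into factorisations of length `ℓ + 1`.

The number of cycles is counted through the least elements of the cycles.
-/

open Equiv Finset

namespace Equiv.Perm

section Merge

variable {α : Type*} [Finite α]

theorem SameCycle.rel_of_forall_apply {f : Perm α} {r : α → α → Prop} (hr : Equivalence r)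
    (hf : ∀ x, r x (f x)) {x y : α} (h : f.SameCycle x y) : r x y := by
  obtain ⟨n, rfl⟩ := h.exists_nat_pow_eq
  clear h
  induction n with
  | zero => exact hr.refl x
  | succ n ih => rw [pow_succ', mul_apply]; exact hr.trans ih (hf _)

variable [DecidableEq α] {g : Perm α} {a b : α}

theorem sameCycle_mul_swap (hab : ¬g.SameCycle a b) : (g * swap a b).SameCycle a b := by
  -- Otherwise `g * swap a b` follows the `g`-cycle of `b` from `g b` all the way round to `b`.
  by_contra hne
  have hpow : ∀ j : ℕ, (g * swap a b).SameCycle a ((g ^ (j + 1)) b) := by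
    intro j
    induction j with
    | zero => exact ⟨1, by simp⟩
    | succ j ih =>
      have hb : (g ^ (j + 1)) b ≠ b := fun h => hne (by rwa [h] at ih)
      have ha : (g ^ (j + 1)) b ≠ a := fun h => hab (h ▸ sameCycle_pow_left.mpr SameCycle.rfl)
      refine ih.trans ⟨1, ?_⟩
      rw [zpow_one, mul_apply, swap_apply_of_ne_of_ne ha hb, ← mul_apply, ← pow_succ']
  have := hpow (orderOf g - 1)
  rw [Nat.sub_add_cancel (orderOf_pos g), pow_orderOf_eq_one, one_apply] at this
  exact hne this

theorem SameCycle.mul_swap (hab : ¬g.SameCycle a b) {x y : α} (h : g.SameCycle x y) :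
    (g * swap a b).SameCycle x y := by
  refine h.rel_of_forall_apply (SameCycle.equivalence _) fun z => ?_
  by_cases hza : z = a
  · subst hza
    exact (sameCycle_mul_swap hab).trans ⟨1, by simp⟩
  by_cases hzb : z = b
  · subst hzb
    exact (sameCycle_mul_swap hab).symm.trans ⟨1, by simp⟩
  exact ⟨1, by simp [swap_apply_of_ne_of_ne hza hzb]⟩

theorem sameCycle_mul_swap_iff (hab : ¬g.SameCycle a b) {x y : α} :
    (g * swap a b).SameCycle x y ↔ g.SameCycle x y ∨
      ((g.SameCycle a x ∨ g.SameCycle b x) ∧ (g.SameCycle a y ∨ g.SameCycle b y)) := by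
  set U : α → Prop := fun z => g.SameCycle a z ∨ g.SameCycle b z
  have hU : ∀ {z w}, g.SameCycle z w → U z → U w := fun h => Or.imp (·.trans h) (·.trans h)
  constructor
  · refine fun h => h.rel_of_forall_apply (r := fun x y => g.SameCycle x y ∨ (U x ∧ U y))
      ⟨fun _ => .inl .rfl, ?_, ?_⟩ fun z => ?_
    · exact Or.imp SameCycle.symm And.symm
    · rintro x y z (hxy | ⟨hx, hy⟩) (hyz | ⟨hy', hz⟩)
      · exact .inl (hxy.trans hyz)
      · exact .inr ⟨hU hxy.symm hy', hz⟩
      · exact .inr ⟨hx, hU hyz hy⟩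
      · exact .inr ⟨hx, hz⟩
    by_cases hza : z = a
    · subst hza
      exact .inr ⟨.inl .rfl, .inr (by simpa using sameCycle_apply_right.mpr SameCycle.rfl)⟩
    by_cases hzb : z = b
    · subst hzb
      exact .inr ⟨.inr .rfl, .inl (by simpa using sameCycle_apply_right.mpr SameCycle.rfl)⟩
    exact .inl (by simpa [swap_apply_of_ne_of_ne hza hzb] using
      sameCycle_apply_right.mpr SameCycle.rfl)
  · have hUa : ∀ {z}, U z → (g * swap a b).SameCycle a z := fun hz => hz.elim
      (·.mul_swap hab) fun hbz => (sameCycle_mul_swap hab).trans (hbz.mul_swap hab)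
    rintro (h | ⟨hx, hy⟩)
    · exact h.mul_swap hab
    · exact (hUa hx).symm.trans (hUa hy)

end Merge


section Minimums

variable {α : Type*} [Fintype α] [LinearOrder α] {g : Perm α} {x y : α}

def cycleMinimums (g : Perm α) : Finset α :=
  {x | ∀ y, g.SameCycle x y → x ≤ y}

theorem mem_cycleMinimums : x ∈ cycleMinimums g ↔ ∀ y, g.SameCycle x y → x ≤ y := by
  simp [cycleMinimums]

theorem eq_of_mem_cycleMinimums (hx : x ∈ cycleMinimums g) (hy : y ∈ cycleMinimums g)
    (h : g.SameCycle x y) : x = y :=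
  le_antisymm (mem_cycleMinimums.mp hx y h) (mem_cycleMinimums.mp hy x h.symm)

theorem exists_mem_cycleMinimums_sameCycle (g : Perm α) (x : α) :
    ∃ u ∈ cycleMinimums g, g.SameCycle x u := by
  obtain ⟨u, hxu, hmin⟩ := exists_min_image {y | g.SameCycle x y} id ⟨x, by simp [SameCycle.rfl]⟩
  simp only [mem_filter, mem_univ, true_and, id] at hxu hmin
  exact ⟨u, mem_cycleMinimums.mpr fun y huy => hmin y (hxu.trans huy), hxu⟩

theorem filter_cycleMinimums_apply_eq_self :
    (cycleMinimums g).filter (fun x => g x = x) = univ.filter fun x => g x = x := by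
  ext x
  simp only [mem_filter, mem_univ, true_and, and_iff_right_iff_imp]
  exact fun hx => mem_cycleMinimums.mpr fun y h => (h.eq_of_left hx).le

theorem card_filter_cycleMinimums_apply_ne_self :
    #{x ∈ cycleMinimums g | g x ≠ x} = #g.cycleFactorsFinset := by
  refine card_bij (fun x _ => g.cycleOf x) (fun x hx => ?_) (fun x hx y hy hxy => ?_) fun c hc => ?_
  · exact cycleOf_mem_cycleFactorsFinset_iff.mpr (mem_support.mpr (mem_filter.mp hx).2)
  · rw [mem_filter] at hx hy
    exact eq_of_mem_cycleMinimums hx.1 hy.1 <|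
      (sameCycle_iff_cycleOf_eq_of_mem_support (mem_support.mpr hx.2) (mem_support.mpr hy.2)).mpr hxy
  · obtain ⟨y, hy⟩ := (mem_cycleFactorsFinset_iff.mp hc).1.nonempty_support
    obtain ⟨u, hu, hyu⟩ := exists_mem_cycleMinimums_sameCycle g y
    have hgy : g y ≠ y := mem_support.mp (mem_cycleFactorsFinset_support_le hc hy)
    refine ⟨u, mem_filter.mpr ⟨hu, (hyu.apply_eq_self_iff.not).mp hgy⟩, ?_⟩
    rw [← hyu.cycleOf_eq, cycle_is_cycleOf hy hc]

theorem card_cycleMinimums (g : Perm α) :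
    #(cycleMinimums g) = Multiset.card g.cycleType + #{x | g x = x} := by
  rw [← card_filter_add_card_filter_not (p := fun x => g x = x), filter_cycleMinimums_apply_eq_self,
    card_filter_cycleMinimums_apply_ne_self, cycleType_def, Multiset.card_map, add_comm]
  rfl


theorem cycleMinimums_nonempty [Nonempty α] (g : Perm α) : (cycleMinimums g).Nonempty :=
  let ⟨u, hu, _⟩ := exists_mem_cycleMinimums_sameCycle g (Classical.arbitrary α)
  ⟨u, hu⟩

theorem exists_not_sameCycle_of_one_lt_card (h : 1 < #(cycleMinimums g)) (x : α) :
    ∃ a, ¬g.SameCycle a x := by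
  obtain ⟨w, hw, hxw⟩ := exists_mem_cycleMinimums_sameCycle g x
  obtain ⟨a, ha, haw⟩ := exists_mem_ne h w
  exact ⟨a, fun hax => haw (eq_of_mem_cycleMinimums ha hw (hax.trans hxw))⟩

variable {a b u v : α}

theorem cycleMinimums_mul_swap_of_lt (hab : ¬g.SameCycle a b)
    (hu : u ∈ cycleMinimums g) (hau : g.SameCycle a u)
    (hv : v ∈ cycleMinimums g) (hbv : g.SameCycle b v) (huv : u < v) :
    cycleMinimums (g * swap a b) = (cycleMinimums g).erase v := by
  ext x
  rw [mem_erase]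
  constructor
  · intro hx
    refine ⟨?_, mem_cycleMinimums.mpr fun y h => mem_cycleMinimums.mp hx y (h.mul_swap hab)⟩
    rintro rfl
    have hxu := (sameCycle_mul_swap_iff hab).mpr (.inr ⟨.inr hbv, .inl hau⟩)
    exact (mem_cycleMinimums.mp hx u hxu).not_gt huv
  · rintro ⟨hxv, hx⟩
    refine mem_cycleMinimums.mpr fun y hy => ?_
    rcases (sameCycle_mul_swap_iff hab).mp hy with h | ⟨hUx, hUy⟩
    · exact mem_cycleMinimums.mp hx y h
    obtain rfl : x = u := hUx.elim (fun hax => eq_of_mem_cycleMinimums hx hu (hax.symm.trans hau))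
      fun hbx => absurd (eq_of_mem_cycleMinimums hx hv (hbx.symm.trans hbv)) hxv
    exact hUy.elim (fun hay => mem_cycleMinimums.mp hu y (hau.symm.trans hay))
      fun hby => huv.le.trans (mem_cycleMinimums.mp hv y (hbv.symm.trans hby))

theorem card_cycleMinimums_mul_swap (hab : ¬g.SameCycle a b) :
    #(cycleMinimums (g * swap a b)) + 1 = #(cycleMinimums g) := by
  obtain ⟨u, hu, hau⟩ := exists_mem_cycleMinimums_sameCycle g a
  obtain ⟨v, hv, hbv⟩ := exists_mem_cycleMinimums_sameCycle g b
  have huv : u ≠ v := by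
    rintro rfl
    exact hab (hau.trans hbv.symm)
  rcases huv.lt_or_gt with huv | hvu
  · rw [cycleMinimums_mul_swap_of_lt hab hu hau hv hbv huv, card_erase_add_one hv]
  · rw [swap_comm, cycleMinimums_mul_swap_of_lt (mt SameCycle.symm hab) hv hbv hu hau hvu,
      card_erase_add_one hu]

end Minimums

end Equiv.Perm

open Equiv.Perm

theorem cyc_eq_card_cycleMinimums {k : ℕ} (π : Perm (Fin k)) : cyc π = #(cycleMinimums π) :=
  (card_cycleMinimums π).symm

theorem cyc_mul_swap_add_one {k : ℕ} {π : Perm (Fin k)} {a b : Fin k} (hab : ¬π.SameCycle a b) :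
    cyc (π * swap a b) + 1 = cyc π := by
  simp only [cyc_eq_card_cycleMinimums, card_cycleMinimums_mul_swap hab]

theorem wfact_le_wfact_succ_mul_swap_last {n : ℕ} (ℓ : ℕ) (π : Perm (Fin (n + 1)))
    {a : Fin (n + 1)} (ha : a < Fin.last n) :
    wfact ℓ π ≤ wfact (ℓ + 1) (π * swap a (Fin.last n)) := by
  refine card_le_card_of_injOn (fun f => Fin.snoc f (a, Fin.last n)) (fun f hf => ?_)
    fun f _ g _ hfg => funext fun i => by simpa using congrFun hfg i.castSucc
  simp only [mem_coe, mem_filter, mem_univ, true_and] at hf ⊢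
  obtain ⟨hlt, hmono, hprod⟩ := hf
  refine ⟨Fin.lastCases (by simpa using ha) (by simpa using hlt), fun i j hij => ?_, ?_⟩
  · induction j using Fin.lastCases with
    | last => simpa using Fin.le_last _
    | cast j =>
      induction i using Fin.lastCases with
      | last => exact absurd hij (Fin.castSucc_lt_last j).not_ge
      | cast i => simpa using hmono i j (Fin.castSucc_le_castSucc_iff.mp hij)
  · rw [List.ofFn_succ', List.prod_concat]
    simp [hprod]

theorem exists_lt_last_not_sameCycle {n : ℕ} {π : Perm (Fin (n + 1))} (h : 2 ≤ cyc π) :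
    ∃ a < Fin.last n, ¬π.SameCycle a (Fin.last n) := by
  rw [cyc_eq_card_cycleMinimums] at h
  obtain ⟨a, ha⟩ := exists_not_sameCycle_of_one_lt_card h (Fin.last n)
  exact ⟨a, (Fin.le_last a).lt_of_ne fun hal => ha (hal ▸ .rfl), ha⟩

theorem exists_cyc_eq_one_wfact_le {n : ℕ} (m : ℕ) (π : Perm (Fin (n + 1)))
    (hπ : cyc π = m + 1) :
    ∃ κ : Perm (Fin (n + 1)), cyc κ = 1 ∧ ∀ ℓ, wfact ℓ π ≤ wfact (ℓ + m) κ := by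
  induction m generalizing π with
  | zero => exact ⟨π, hπ, fun ℓ => le_rfl⟩
  | succ m ih =>
    obtain ⟨a, hal, ha⟩ := exists_lt_last_not_sameCycle (π := π) (by omega)
    obtain ⟨κ, hκ, hle⟩ := ih (π * swap a (Fin.last n)) (by have := cyc_mul_swap_add_one ha; omega)
    refine ⟨κ, hκ, fun ℓ => ?_⟩
    calc wfact ℓ π ≤ wfact (ℓ + 1) (π * swap a (Fin.last n)) :=
          wfact_le_wfact_succ_mul_swap_last ℓ π hal
      _ ≤ wfact (ℓ + (m + 1)) κ := by simpa only [add_right_comm, add_assoc] using hle (ℓ + 1)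

/-- Theorem: every permutation `π` has a full cycle `κ` such that for all `ℓ`,
`w_ℓ(π) ≤ w_{ℓ + c(π) − 1}(κ)`. -/
theorem wfact_le_wfact_cycle {k : ℕ} (hk : 1 ≤ k) (π : Equiv.Perm (Fin k)) :
    ∃ κ : Equiv.Perm (Fin k), cyc κ = 1 ∧
      ∀ ℓ : ℕ, wfact ℓ π ≤ wfact (ℓ + cyc π - 1) κ := by
  obtain ⟨n, rfl⟩ : ∃ n, k = n + 1 := ⟨k - 1, by omega⟩
  have hcyc : 1 ≤ cyc π := by
    rw [cyc_eq_card_cycleMinimums]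
    exact (cycleMinimums_nonempty π).card_pos
  obtain ⟨κ, hκ, hle⟩ := exists_cyc_eq_one_wfact_le (cyc π - 1) π (by omega)
  exact ⟨κ, hκ, fun ℓ => by simpa only [Nat.add_sub_assoc hcyc] using hle ℓ⟩
end

section
/- Let k ≥ 1, let π be a permutation of Fin k, let κ be a k-cycle of Fin k (a permutation that is a single cycle on all of Fin k, i.e. c(κ) = 1), and let g be a natural number. Then the number of permutations σ of Fin k with c(π * σ⁻¹) + c(σ) ≥ k + c(π) − 2g is at most the number of permutations σ of Fin k with c(κ * σ⁻¹) + c(σ) ≥ k + 1 − 2g. -/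
namespace CycAux

open Equiv Equiv.Perm Finset

variable {k : ℕ}

/-- The orbit of `x` under `π` as a finset. -/
def orb (π : Equiv.Perm (Fin k)) (x : Fin k) : Finset (Fin k) :=
  Finset.univ.filter fun y => π.SameCycle x y

lemma mem_orb {π : Equiv.Perm (Fin k)} {x y : Fin k} : y ∈ orb π x ↔ π.SameCycle x y := by
  simp [orb]

lemma self_mem_orb (π : Equiv.Perm (Fin k)) (x : Fin k) : x ∈ orb π x :=
  mem_orb.2 (Equiv.Perm.SameCycle.refl _ _)

lemma apply_mem_orb (π : Equiv.Perm (Fin k)) (x : Fin k) : π x ∈ orb π x :=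
  mem_orb.2 ⟨1, by simp⟩

lemma orb_eq_of_sameCycle {π : Equiv.Perm (Fin k)} {x y : Fin k} (h : π.SameCycle x y) :
    orb π x = orb π y := by
  ext z
  simp only [mem_orb]
  exact ⟨fun hz => h.symm.trans hz, fun hz => h.trans hz⟩

lemma orb_of_fixed {π : Equiv.Perm (Fin k)} {x : Fin k} (h : π x = x) : orb π x = {x} := by
  ext z
  simp only [mem_orb, Finset.mem_singleton]
  constructor
  · rintro ⟨i, rfl⟩
    exact (Equiv.Perm.zpow_apply_eq_self_of_apply_eq_self h i)
  · rintro rfl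
    exact Equiv.Perm.SameCycle.refl _ _

lemma orb_eq_support_cycleOf {π : Equiv.Perm (Fin k)} {x : Fin k} (hx : x ∈ π.support) :
    orb π x = (π.cycleOf x).support := by
  ext y
  rw [mem_orb, Equiv.Perm.mem_support_cycleOf_iff]
  exact ⟨fun h => ⟨h, hx⟩, fun h => h.1⟩

lemma image_support_orb (π : Equiv.Perm (Fin k)) :
    π.support.image (orb π) = π.cycleFactorsFinset.image Equiv.Perm.support := by
  ext s
  simp only [Finset.mem_image]
  constructor
  · rintro ⟨x, hx, rfl⟩
    exact ⟨π.cycleOf x, Equiv.Perm.cycleOf_mem_cycleFactorsFinset_iff.2 hx,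
      (orb_eq_support_cycleOf hx).symm⟩
  · rintro ⟨c, hc, rfl⟩
    have hc' := Equiv.Perm.mem_cycleFactorsFinset_iff.1 hc
    have hne : c.support.Nonempty := by
      rw [Finset.nonempty_iff_ne_empty, Ne, Equiv.Perm.support_eq_empty_iff]
      exact hc'.1.ne_one
    obtain ⟨x, hx⟩ := hne
    have hxπ : x ∈ π.support := by
      rw [Equiv.Perm.mem_support, ← hc'.2 x hx]
      exact Equiv.Perm.mem_support.1 hx
    refine ⟨x, hxπ, ?_⟩
    rw [orb_eq_support_cycleOf hxπ, ← Equiv.Perm.cycle_is_cycleOf hx hc]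

lemma cyc_eq_card_orbs (π : Equiv.Perm (Fin k)) :
    cyc π = (Finset.univ.image (orb π)).card := by
  classical
  have hsplit : (Finset.univ : Finset (Fin k)) =
      π.support ∪ (Finset.univ.filter fun x => π x = x) := by
    ext x
    simp [Equiv.Perm.mem_support, or_comm, em]
  rw [hsplit, Finset.image_union]
  have hdisj : Disjoint (π.support.image (orb π))
      ((Finset.univ.filter fun x => π x = x).image (orb π)) := by
    rw [Finset.disjoint_left]
    rintro s hs ht
    obtain ⟨x, hx, rfl⟩ := Finset.mem_image.1 hs
    obtain ⟨y, hy, hxy⟩ := Finset.mem_image.1 ht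
    have hyfix : π y = y := (Finset.mem_filter.1 hy).2
    rw [orb_of_fixed hyfix] at hxy
    have h1 : x ∈ ({y} : Finset (Fin k)) := by rw [hxy]; exact self_mem_orb π x
    have h2 : π x ∈ ({y} : Finset (Fin k)) := by rw [hxy]; exact apply_mem_orb π x
    simp only [Finset.mem_singleton] at h1 h2
    exact Equiv.Perm.mem_support.1 hx (h2.trans h1.symm)
  rw [Finset.card_union_of_disjoint hdisj]
  have hfix : ((Finset.univ.filter fun x => π x = x).image (orb π)).card =
      (Finset.univ.filter fun x => π x = x).card := by
    rw [Finset.image_congr (g := fun x => ({x} : Finset (Fin k)))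
      (fun x hx => orb_of_fixed (Finset.mem_filter.1 hx).2)]
    exact Finset.card_image_of_injective _ Finset.singleton_injective
  have hsupp : (π.support.image (orb π)).card = Multiset.card π.cycleType := by
    rw [image_support_orb]
    rw [Finset.card_image_of_injOn]
    · rw [Equiv.Perm.cycleType_def, Multiset.card_map]
      rfl
    · intro c hc d hd hcd
      have hc' := Equiv.Perm.mem_cycleFactorsFinset_iff.1 hc
      have hne : c.support.Nonempty := by
        rw [Finset.nonempty_iff_ne_empty, Ne, Equiv.Perm.support_eq_empty_iff]
        exact hc'.1.ne_one
      obtain ⟨x, hx⟩ := hne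
      have hx' : x ∈ d.support := by rw [← hcd]; exact hx
      rw [Equiv.Perm.cycle_is_cycleOf hx hc, Equiv.Perm.cycle_is_cycleOf hx' hd]
  rw [cyc, hfix, hsupp]

lemma fixed_card (π : Equiv.Perm (Fin k)) :
    (Finset.univ.filter fun x => π x = x).card = k - π.support.card := by
  have : (Finset.univ.filter fun x => π x = x) = π.supportᶜ := by
    ext x
    simp [Equiv.Perm.mem_support]
  rw [this, Finset.card_compl, Fintype.card_fin]

lemma cyc_eq_sub (π : Equiv.Perm (Fin k)) :
    cyc π = Multiset.card π.cycleType + (k - π.support.card) := by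
  rw [cyc, fixed_card]

lemma support_card_le (π : Equiv.Perm (Fin k)) : π.support.card ≤ k := by
  simpa using Finset.card_le_univ π.support

/-- Multiplying by a swap flips the parity of the cycle count. -/
lemma cyc_swap_mul_ne {a b : Fin k} (hab : a ≠ b) (ρ : Equiv.Perm (Fin k)) :
    cyc (Equiv.swap a b * ρ) ≠ cyc ρ := by
  intro h
  have hsum1 := Equiv.Perm.sum_cycleType (Equiv.swap a b * ρ)
  have hsum2 := Equiv.Perm.sum_cycleType ρ
  have hle1 := support_card_le (Equiv.swap a b * ρ)
  have hle2 := support_card_le ρ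
  rw [cyc_eq_sub, cyc_eq_sub] at h
  have hpar : ((Equiv.swap a b * ρ).cycleType.sum +
      Multiset.card (Equiv.swap a b * ρ).cycleType) % 2 =
      (ρ.cycleType.sum + Multiset.card ρ.cycleType) % 2 := by omega
  have hsign : Equiv.Perm.sign (Equiv.swap a b * ρ) = - Equiv.Perm.sign ρ := by
    rw [Equiv.Perm.sign_mul, Equiv.Perm.sign_swap hab]
    exact neg_one_mul _
  rw [Equiv.Perm.sign_of_cycleType, Equiv.Perm.sign_of_cycleType] at hsign
  rcases Nat.even_or_odd (ρ.cycleType.sum + Multiset.card ρ.cycleType) with he | ho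
  · have he' : Even ((Equiv.swap a b * ρ).cycleType.sum +
        Multiset.card (Equiv.swap a b * ρ).cycleType) := by
      rw [Nat.even_iff] at he ⊢; omega
    rw [he.neg_one_pow, he'.neg_one_pow] at hsign
    exact absurd hsign (by decide)
  · have ho' : Odd ((Equiv.swap a b * ρ).cycleType.sum +
        Multiset.card (Equiv.swap a b * ρ).cycleType) := by
      rw [Nat.odd_iff] at ho ⊢; omega
    rw [ho.neg_one_pow, ho'.neg_one_pow] at hsign
    exact absurd hsign (by decide)

lemma pow_swap_mul_eq {ρ : Equiv.Perm (Fin k)} {a b x : Fin k}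
    (hxa : ¬ ρ.SameCycle x a) (hxb : ¬ ρ.SameCycle x b) (n : ℕ) :
    ((Equiv.swap a b * ρ) ^ n) x = (ρ ^ n) x := by
  induction n with
  | zero => rfl
  | succ n ih =>
    have ha : (ρ ^ (n + 1 : ℕ)) x ≠ a := fun h => hxa ⟨(n + 1 : ℕ), by rw [zpow_natCast]; exact h⟩
    have hb : (ρ ^ (n + 1 : ℕ)) x ≠ b := fun h => hxb ⟨(n + 1 : ℕ), by rw [zpow_natCast]; exact h⟩
    have hstep : (ρ ^ (n + 1 : ℕ)) x = ρ ((ρ ^ n) x) := by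
      rw [pow_succ', Equiv.Perm.mul_apply]
    rw [pow_succ', Equiv.Perm.mul_apply, Equiv.Perm.mul_apply, ih, ← hstep]
    rw [hstep] at ha hb
    rw [hstep]
    exact Equiv.swap_apply_of_ne_of_ne ha hb

lemma sameCycle_swap_mul_of {ρ : Equiv.Perm (Fin k)} {a b x y : Fin k}
    (hxa : ¬ ρ.SameCycle x a) (hxb : ¬ ρ.SameCycle x b) (h : ρ.SameCycle x y) :
    (Equiv.swap a b * ρ).SameCycle x y := by
  obtain ⟨n, -, hn⟩ := h.exists_pow_eq'
  exact ⟨(n : ℕ), by rw [zpow_natCast, pow_swap_mul_eq hxa hxb]; exact hn⟩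

lemma not_sameCycle_swap_mul {ρ : Equiv.Perm (Fin k)} {a b x : Fin k}
    (hxa : ¬ ρ.SameCycle x a) (hxb : ¬ ρ.SameCycle x b) :
    ¬ (Equiv.swap a b * ρ).SameCycle x a ∧ ¬ (Equiv.swap a b * ρ).SameCycle x b := by
  constructor
  · rintro h
    obtain ⟨n, -, hn⟩ := h.exists_pow_eq'
    rw [pow_swap_mul_eq hxa hxb] at hn
    exact hxa ⟨(n : ℕ), by rw [zpow_natCast]; exact hn⟩
  · rintro h
    obtain ⟨n, -, hn⟩ := h.exists_pow_eq'
    rw [pow_swap_mul_eq hxa hxb] at hn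
    exact hxb ⟨(n : ℕ), by rw [zpow_natCast]; exact hn⟩

lemma orb_swap_mul_eq {ρ : Equiv.Perm (Fin k)} {a b x : Fin k}
    (hxa : ¬ ρ.SameCycle x a) (hxb : ¬ ρ.SameCycle x b) :
    orb (Equiv.swap a b * ρ) x = orb ρ x := by
  obtain ⟨hxa', hxb'⟩ := not_sameCycle_swap_mul hxa hxb
  ext z
  simp only [mem_orb]
  constructor
  · intro h
    have := sameCycle_swap_mul_of (ρ := Equiv.swap a b * ρ) (a := a) (b := b) hxa' hxb' h
    rwa [Equiv.swap_mul_self_mul] at this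
  · exact sameCycle_swap_mul_of hxa hxb

/-- The common part of the orbits: those avoiding `a` and `b`. -/
def goodOrbs (ρ : Equiv.Perm (Fin k)) (a b : Fin k) : Finset (Finset (Fin k)) :=
  (Finset.univ.filter fun x => ¬ ρ.SameCycle x a ∧ ¬ ρ.SameCycle x b).image (orb ρ)

lemma goodOrbs_swap_mul_subset (ρ : Equiv.Perm (Fin k)) (a b : Fin k) :
    goodOrbs ρ a b ⊆ goodOrbs (Equiv.swap a b * ρ) a b := by
  intro s hs
  simp only [goodOrbs, Finset.mem_image, Finset.mem_filter] at hs ⊢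
  obtain ⟨x, ⟨-, hxa, hxb⟩, rfl⟩ := hs
  obtain ⟨hxa', hxb'⟩ := not_sameCycle_swap_mul hxa hxb
  exact ⟨x, ⟨Finset.mem_univ x, hxa', hxb'⟩, orb_swap_mul_eq hxa hxb⟩

lemma goodOrbs_swap_mul (ρ : Equiv.Perm (Fin k)) (a b : Fin k) :
    goodOrbs (Equiv.swap a b * ρ) a b = goodOrbs ρ a b := by
  refine Finset.Subset.antisymm ?_ (goodOrbs_swap_mul_subset ρ a b)
  have := goodOrbs_swap_mul_subset (Equiv.swap a b * ρ) a b
  rwa [Equiv.swap_mul_self_mul] at this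

lemma orb_not_mem_goodOrbs (ρ : Equiv.Perm (Fin k)) (a b : Fin k) :
    orb ρ a ∉ goodOrbs ρ a b ∧ orb ρ b ∉ goodOrbs ρ a b := by
  constructor
  · intro h
    obtain ⟨x, hx, hxo⟩ := Finset.mem_image.1 h
    have hxa := (Finset.mem_filter.1 hx).2.1
    exact hxa (mem_orb.1 (by rw [hxo]; exact self_mem_orb ρ a))
  · intro h
    obtain ⟨x, hx, hxo⟩ := Finset.mem_image.1 h
    have hxb := (Finset.mem_filter.1 hx).2.2
    exact hxb (mem_orb.1 (by rw [hxo]; exact self_mem_orb ρ b))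

lemma card_orbs_le (ρ : Equiv.Perm (Fin k)) (a b : Fin k) :
    (Finset.univ.image (orb ρ)).card ≤ (goodOrbs ρ a b).card + 2 := by
  have hsub : Finset.univ.image (orb ρ) ⊆
      goodOrbs ρ a b ∪ {orb ρ a, orb ρ b} := by
    intro s hs
    obtain ⟨x, -, rfl⟩ := Finset.mem_image.1 hs
    by_cases hxa : ρ.SameCycle x a
    · rw [Finset.mem_union]
      right
      simp [orb_eq_of_sameCycle hxa]
    by_cases hxb : ρ.SameCycle x b
    · rw [Finset.mem_union]
      right
      simp [orb_eq_of_sameCycle hxb]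
    · exact Finset.mem_union_left _ (Finset.mem_image.2
        ⟨x, Finset.mem_filter.2 ⟨Finset.mem_univ x, hxa, hxb⟩, rfl⟩)
  calc (Finset.univ.image (orb ρ)).card ≤ (goodOrbs ρ a b ∪ {orb ρ a, orb ρ b}).card :=
        Finset.card_le_card hsub
    _ ≤ (goodOrbs ρ a b).card + ({orb ρ a, orb ρ b} : Finset _).card := Finset.card_union_le _ _
    _ ≤ (goodOrbs ρ a b).card + 2 := by
        have : ({orb ρ a, orb ρ b} : Finset (Finset (Fin k))).card ≤ 2 :=
          (Finset.card_insert_le _ _).trans (by simp)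
        omega

lemma card_orbs_ge (ρ : Equiv.Perm (Fin k)) (a b : Fin k) :
    (goodOrbs ρ a b).card + 1 ≤ (Finset.univ.image (orb ρ)).card := by
  have hsub : insert (orb ρ a) (goodOrbs ρ a b) ⊆ Finset.univ.image (orb ρ) := by
    intro s hs
    rcases Finset.mem_insert.1 hs with rfl | hs
    · exact Finset.mem_image_of_mem _ (Finset.mem_univ a)
    · obtain ⟨x, -, rfl⟩ := Finset.mem_image.1 hs
      exact Finset.mem_image_of_mem _ (Finset.mem_univ x)
  have := Finset.card_le_card hsub
  rw [Finset.card_insert_of_notMem (orb_not_mem_goodOrbs ρ a b).1] at this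
  omega

lemma card_orbs_ge_two {ρ : Equiv.Perm (Fin k)} {a b : Fin k} (hb : b ∉ orb ρ a) :
    (goodOrbs ρ a b).card + 2 ≤ (Finset.univ.image (orb ρ)).card := by
  have hne : orb ρ a ≠ orb ρ b := fun h => hb (by rw [h]; exact self_mem_orb ρ b)
  have hsub : insert (orb ρ a) (insert (orb ρ b) (goodOrbs ρ a b)) ⊆
      Finset.univ.image (orb ρ) := by
    intro s hs
    rcases Finset.mem_insert.1 hs with rfl | hs
    · exact Finset.mem_image_of_mem _ (Finset.mem_univ a)
    rcases Finset.mem_insert.1 hs with rfl | hs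
    · exact Finset.mem_image_of_mem _ (Finset.mem_univ b)
    · obtain ⟨x, -, rfl⟩ := Finset.mem_image.1 hs
      exact Finset.mem_image_of_mem _ (Finset.mem_univ x)
  have := Finset.card_le_card hsub
  rw [Finset.card_insert_of_notMem, Finset.card_insert_of_notMem
    (orb_not_mem_goodOrbs ρ a b).2] at this
  · omega
  · rw [Finset.mem_insert]
    push_neg
    exact ⟨hne, (orb_not_mem_goodOrbs ρ a b).1⟩

lemma cyc_le_swap_mul_add_one (ρ : Equiv.Perm (Fin k)) (a b : Fin k) :
    cyc ρ ≤ cyc (Equiv.swap a b * ρ) + 1 := by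
  rw [cyc_eq_card_orbs, cyc_eq_card_orbs]
  have h1 := card_orbs_le ρ a b
  have h2 := card_orbs_ge (Equiv.swap a b * ρ) a b
  rw [goodOrbs_swap_mul] at h2
  omega

lemma cyc_swap_mul_merge {ρ : Equiv.Perm (Fin k)} {a b : Fin k} (hab : a ≠ b)
    (h : ¬ ρ.SameCycle a b) :
    cyc (Equiv.swap a b * ρ) + 1 ≤ cyc ρ := by
  have h1 : cyc (Equiv.swap a b * ρ) ≤ cyc ρ := by
    rw [cyc_eq_card_orbs, cyc_eq_card_orbs]
    have ha := card_orbs_le (Equiv.swap a b * ρ) a b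
    rw [goodOrbs_swap_mul] at ha
    have hb : b ∉ orb ρ a := by simpa [mem_orb] using h
    have := card_orbs_ge_two hb
    omega
  have h2 := cyc_swap_mul_ne hab ρ
  omega

lemma cyc_conj (u σ : Equiv.Perm (Fin k)) : cyc (u * σ * u⁻¹) = cyc σ := by
  rw [cyc_eq_sub, cyc_eq_sub, Equiv.Perm.cycleType_conj, Equiv.Perm.support_conj,
    Finset.card_map]

lemma cyc_pos (hk : 1 ≤ k) (σ : Equiv.Perm (Fin k)) : 1 ≤ cyc σ := by
  rw [cyc_eq_card_orbs]
  have : orb σ ⟨0, hk⟩ ∈ Finset.univ.image (orb σ) :=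
    Finset.mem_image_of_mem _ (Finset.mem_univ _)
  exact Finset.card_pos.2 ⟨_, this⟩

lemma exists_not_sameCycle {σ : Equiv.Perm (Fin k)} (h : 2 ≤ cyc σ) :
    ∃ a b : Fin k, a ≠ b ∧ ¬ σ.SameCycle a b := by
  by_contra hc
  push_neg at hc
  rw [cyc_eq_card_orbs] at h
  obtain ⟨s, hs⟩ := Finset.card_pos.1 (by omega : 0 < (Finset.univ.image (orb σ)).card)
  obtain ⟨x₀, -, rfl⟩ := Finset.mem_image.1 hs
  have hsub : Finset.univ.image (orb σ) ⊆ {orb σ x₀} := by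
    intro s hs'
    obtain ⟨x, -, rfl⟩ := Finset.mem_image.1 hs'
    rcases eq_or_ne x x₀ with rfl | hne
    · simp
    · simp [orb_eq_of_sameCycle (hc x x₀ hne)]
  have := Finset.card_le_card hsub
  simp at this
  omega

lemma cycleType_of_cyc_eq_one (hk : 1 ≤ k) {σ : Equiv.Perm (Fin k)} (h : cyc σ = 1) :
    σ.cycleType = if k = 1 then 0 else {k} := by
  have hsum := Equiv.Perm.sum_cycleType σ
  have hle := support_card_le σ
  rw [cyc_eq_sub] at h
  rcases Nat.lt_or_ge (Multiset.card σ.cycleType) 1 with hcard | hcard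
  · -- card = 0, so σ = 1 and k = 1
    have hcard0 : Multiset.card σ.cycleType = 0 := by omega
    have hσ : σ = 1 := Equiv.Perm.card_cycleType_eq_zero.1 hcard0
    have hsupp : σ.support.card = 0 := by
      rw [hσ]; simp
    have hk1 : k = 1 := by omega
    rw [if_pos hk1]
    exact Multiset.card_eq_zero.1 hcard0
  · have hcard1 : Multiset.card σ.cycleType = 1 := by omega
    have hsuppk : σ.support.card = k := by omega
    obtain ⟨a, ha⟩ := Multiset.card_eq_one.1 hcard1
    have hak : a = k := by
      have : σ.cycleType.sum = a := by rw [ha]; simp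
      omega
    have hk1 : k ≠ 1 := by
      intro hk1
      have h2 : 2 ≤ a := Equiv.Perm.two_le_of_mem_cycleType (by rw [ha]; simp)
      omega
    rw [if_neg hk1, ha, hak]

lemma isConj_of_cyc_eq_one (hk : 1 ≤ k) {σ τ : Equiv.Perm (Fin k)}
    (hσ : cyc σ = 1) (hτ : cyc τ = 1) : IsConj σ τ := by
  rw [Equiv.Perm.isConj_iff_cycleType_eq, cycleType_of_cyc_eq_one hk hσ,
    cycleType_of_cyc_eq_one hk hτ]

end CycAux

/-- Theorem: the number of `σ` with `c(π σ⁻¹) + c(σ) ≥ k + c(π) − 2g` is at most the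
corresponding count for a full `k`-cycle `κ`. -/
theorem card_low_genus_perms_le_cycle_count {k : ℕ} (hk : 1 ≤ k)
    (π : Equiv.Perm (Fin k)) (κ : Equiv.Perm (Fin k)) (hκ : cyc κ = 1) (g : ℕ) :
    (Finset.univ.filter fun σ : Equiv.Perm (Fin k) =>
        (k : ℤ) + (cyc π : ℤ) - 2 * (g : ℤ) ≤ (cyc (π * σ⁻¹) : ℤ) + (cyc σ : ℤ)).card ≤
    (Finset.univ.filter fun σ : Equiv.Perm (Fin k) =>
        (k : ℤ) + 1 - 2 * (g : ℤ) ≤ (cyc (κ * σ⁻¹) : ℤ) + (cyc σ : ℤ)).card := by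
  classical
  suffices H : ∀ n (π : Equiv.Perm (Fin k)), cyc π ≤ n →
      (Finset.univ.filter fun σ : Equiv.Perm (Fin k) =>
        (k : ℤ) + (cyc π : ℤ) - 2 * (g : ℤ) ≤ (cyc (π * σ⁻¹) : ℤ) + (cyc σ : ℤ)).card ≤
      (Finset.univ.filter fun σ : Equiv.Perm (Fin k) =>
        (k : ℤ) + 1 - 2 * (g : ℤ) ≤ (cyc (κ * σ⁻¹) : ℤ) + (cyc σ : ℤ)).card from
    H (cyc π) π le_rfl
  intro n
  induction n with
  | zero =>
    intro π hπ
    have := CycAux.cyc_pos hk π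
    omega
  | succ n ih =>
    intro π hπ
    by_cases h1 : cyc π = 1
    · -- π is a full cycle; conjugate to κ
      obtain ⟨u, hu⟩ := isConj_iff.1 (CycAux.isConj_of_cyc_eq_one hk h1 hκ)
      apply le_of_eq
      apply Finset.card_bij (fun σ _ => u * σ * u⁻¹)
      · intro σ hσ
        rw [Finset.mem_filter] at hσ ⊢
        refine ⟨Finset.mem_univ _, ?_⟩
        have e1 : κ * (u * σ * u⁻¹)⁻¹ = u * (π * σ⁻¹) * u⁻¹ := by
          rw [← hu]; group
        have e2 : cyc (u * σ * u⁻¹) = cyc σ := CycAux.cyc_conj u σ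
        rw [e1, CycAux.cyc_conj, e2]
        have := hσ.2
        rw [h1] at this
        exact_mod_cast this
      · intro σ₁ h₁ σ₂ h₂ he
        have : u⁻¹ * (u * σ₁ * u⁻¹) * u = u⁻¹ * (u * σ₂ * u⁻¹) * u := by rw [he]
        simpa [mul_assoc] using this
      · intro τ hτ
        refine ⟨u⁻¹ * τ * u, ?_, by group⟩
        rw [Finset.mem_filter] at hτ ⊢
        refine ⟨Finset.mem_univ _, ?_⟩
        have e1 : π * (u⁻¹ * τ * u)⁻¹ = u⁻¹ * (κ * τ⁻¹) * u := by
          rw [← hu]; group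
        have e2 : cyc (u⁻¹ * (κ * τ⁻¹) * u) = cyc (κ * τ⁻¹) := by
          have := CycAux.cyc_conj u⁻¹ (κ * τ⁻¹)
          simpa using this
        have e3 : cyc (u⁻¹ * τ * u) = cyc τ := by
          have := CycAux.cyc_conj u⁻¹ τ
          simpa using this
        rw [e1, e2, e3, h1]
        have := hτ.2
        exact_mod_cast this
    · have h2 : 2 ≤ cyc π := by
        have := CycAux.cyc_pos hk π
        omega
      obtain ⟨a, b, hab, hnc⟩ := CycAux.exists_not_sameCycle h2
      have hmerge := CycAux.cyc_swap_mul_merge hab hnc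
      have step : (Finset.univ.filter fun σ : Equiv.Perm (Fin k) =>
          (k : ℤ) + (cyc π : ℤ) - 2 * (g : ℤ) ≤ (cyc (π * σ⁻¹) : ℤ) + (cyc σ : ℤ)).card ≤
          (Finset.univ.filter fun σ : Equiv.Perm (Fin k) =>
          (k : ℤ) + (cyc (Equiv.swap a b * π) : ℤ) - 2 * (g : ℤ) ≤
            (cyc (Equiv.swap a b * π * σ⁻¹) : ℤ) + (cyc σ : ℤ)).card := by
        apply Finset.card_le_card
        intro σ hσ
        rw [Finset.mem_filter] at hσ ⊢
        refine ⟨Finset.mem_univ _, ?_⟩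
        have hb1 := CycAux.cyc_le_swap_mul_add_one (π * σ⁻¹) a b
        have e : Equiv.swap a b * π * σ⁻¹ = Equiv.swap a b * (π * σ⁻¹) := by
          rw [mul_assoc]
        rw [e]
        have := hσ.2
        omega
      exact step.trans (ih (Equiv.swap a b * π) (by omega))
end
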